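/- arXiv:1311.2424 — 7 statements merged into one kernel-verified Lean document; each statement's English description precedes it below -/
import Mathlib

section
/- The stabilizer C_k of x_k under the conjugation action of GL_n(K) consists exactly of the invertible block upper-triangular matrices of the form [[g, *, *], [0, h, *], [0, 0, g]] with g ∈ GL_k and h ∈ GL_{n-2k}. -/
/-!
Write `m = n - k`. Multiplying by `x_k` shifts indices by `m`: `(M x_k) i j = M i (j - m)` for
`j ≥ m` (and `0` otherwise), `(x_k M) i j = M (i + m) j` for `i < k` (and `0` otherwise).
Comparing entries of `M x_k` and `x_k M`: where exactly one side is a shifted entry of `M`, that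
entry vanishes (the two blocks below the diagonal); where both are, `M i j = M (i + m) (j + m)`.
-/

open Matrix

def xk (K : Type*) [Field K] (n k : ℕ) : Matrix (Fin n) (Fin n) K :=
  fun r c => if (r : ℕ) + (n - k) = (c : ℕ) then 1 else 0

section

variable {K : Type*} [Field K] {n k : ℕ}

theorem mul_xk_apply_of_add_eq {l : Type*} (M : Matrix l (Fin n) K) (i : l) {j j' : Fin n}
    (h : (j' : ℕ) + (n - k) = j) : (M * xk K n k) i j = M i j' := by
  rw [mul_apply, Fintype.sum_eq_single j' fun m hm => ?_]
  · simp [xk, h]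
  · simp only [xk, mul_ite, mul_one, mul_zero, ite_eq_right_iff]
    exact fun hm' => absurd (Fin.ext (by omega)) hm

theorem mul_xk_apply_of_lt {l : Type*} (M : Matrix l (Fin n) K) (i : l) {j : Fin n}
    (hj : (j : ℕ) < n - k) : (M * xk K n k) i j = 0 :=
  mul_apply.trans <| Finset.sum_eq_zero fun m _ => by
    simp only [xk]; rw [if_neg (by omega), mul_zero]

theorem xk_mul_apply_of_add_eq {l : Type*} (M : Matrix (Fin n) l K) {i i' : Fin n} (j : l)
    (h : (i : ℕ) + (n - k) = i') : (xk K n k * M) i j = M i' j := by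
  rw [mul_apply, Fintype.sum_eq_single i' fun m hm => ?_]
  · simp [xk, h]
  · simp only [xk, ite_mul, one_mul, zero_mul, ite_eq_right_iff]
    exact fun hm' => absurd (Fin.ext (by omega)) hm

theorem xk_mul_apply_of_le {l : Type*} (M : Matrix (Fin n) l K) {i : Fin n} (j : l)
    (hi : k ≤ (i : ℕ)) : (xk K n k * M) i j = 0 :=
  mul_apply.trans <| Finset.sum_eq_zero fun m _ => by
    simp only [xk]; rw [if_neg (by omega), zero_mul]

variable {M : Matrix (Fin n) (Fin n) K}

theorem apply_eq_zero_of_mul_xk_eq (hc : M * xk K n k = xk K n k * M) {i j : Fin n}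
    (hij : (k ≤ (i : ℕ) ∧ (j : ℕ) < k) ∨ (n - k ≤ (i : ℕ) ∧ (j : ℕ) < n - k)) :
    M i j = 0 := by
  rcases hij with ⟨hi, hj⟩ | ⟨hi, hj⟩
  · have := congrFun₂ hc i ⟨j + (n - k), by omega⟩
    rwa [mul_xk_apply_of_add_eq M i rfl, xk_mul_apply_of_le M _ hi] at this
  · have := congrFun₂ hc ⟨i - (n - k), by omega⟩ j
    rw [mul_xk_apply_of_lt M _ hj,
      xk_mul_apply_of_add_eq M j (i' := i) (by simp only; omega)] at this
    exact this.symm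

theorem apply_eq_apply_of_mul_xk_eq (hc : M * xk K n k = xk K n k * M)
    {i j i' j' : Fin n} (hi : (i : ℕ) + (n - k) = i') (hj : (j : ℕ) + (n - k) = j') :
    M i j = M i' j' := by
  simpa only [mul_xk_apply_of_add_eq M i hj, xk_mul_apply_of_add_eq M j' hi] using
    congrFun₂ hc i j'

theorem mul_xk_eq_xk_mul_of_apply
    (hzero : ∀ i j : Fin n,
      ((k ≤ (i : ℕ) ∧ (j : ℕ) < k) ∨ (n - k ≤ (i : ℕ) ∧ (j : ℕ) < n - k)) → M i j = 0)
    (hshift : ∀ i j i' j' : Fin n, (i : ℕ) + (n - k) = i' → (j : ℕ) + (n - k) = j' →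
      M i j = M i' j') :
    M * xk K n k = xk K n k * M := by
  ext i j
  by_cases hj : n - k ≤ (j : ℕ)
  · have hj' : ((⟨j - (n - k), by omega⟩ : Fin n) : ℕ) + (n - k) = j := by simp only; omega
    rw [mul_xk_apply_of_add_eq M i hj']
    by_cases hi : (i : ℕ) < k
    · rw [xk_mul_apply_of_add_eq M j (i' := ⟨i + (n - k), by omega⟩) rfl]
      exact hshift _ _ _ _ rfl hj'
    · rw [xk_mul_apply_of_le M j (by omega)]
      exact hzero _ _ (Or.inl ⟨by omega, by simp only; omega⟩)
  · rw [mul_xk_apply_of_lt M i (by omega)]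
    by_cases hi : (i : ℕ) < k
    · rw [xk_mul_apply_of_add_eq M j (i' := ⟨i + (n - k), by omega⟩) rfl]
      exact (hzero _ _ (Or.inr ⟨by simp only; omega, by omega⟩)).symm
    · rw [xk_mul_apply_of_le M j (by omega)]

end

theorem stmt_2 (K : Type*) [Field K] (n k : ℕ) (d : GL (Fin n) K) :
    (d : Matrix (Fin n) (Fin n) K) * xk K n k = xk K n k * (d : Matrix (Fin n) (Fin n) K) ↔
      ((∀ i j : Fin n,
          ((k ≤ (i : ℕ) ∧ (j : ℕ) < k) ∨ (n - k ≤ (i : ℕ) ∧ (j : ℕ) < n - k)) →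
          (d : Matrix (Fin n) (Fin n) K) i j = 0) ∧
        ∀ i j : Fin n, ∀ _hi : (i : ℕ) < k, ∀ _hj : (j : ℕ) < k,
          (d : Matrix (Fin n) (Fin n) K) i j =
            (d : Matrix (Fin n) (Fin n) K)
              ⟨(i : ℕ) + (n - k), by omega⟩ ⟨(j : ℕ) + (n - k), by omega⟩) := by
  refine ⟨fun hc => ⟨fun i j => apply_eq_zero_of_mul_xk_eq hc,
    fun i j _ _ => apply_eq_apply_of_mul_xk_eq hc rfl rfl⟩, fun ⟨hzero, hshift⟩ => ?_⟩
  refine mul_xk_eq_xk_mul_of_apply hzero fun i j i' j' hi hj => ?_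
  convert hshift i j (by omega) (by omega) using 2
  · exact Fin.ext hi.symm
  · exact Fin.ext hj.symm
end

section
/- Let W(C_k) ≤ S_n be the subgroup generated by the elements s_j·s_{n-k+j} for j = 1,…,k-1 together with the s_i for k+1 ≤ i ≤ n-k-1. If σ ∈ Z_k (a minimal coset representative of W/W(L)) and α ∈ W_k = ⟨s_1,…,s_{k-1}⟩, then the product σα is a minimal-length element of its left coset σα·W(C_k) in S_n. -/
def permLength (n : ℕ) (σ : Equiv.Perm (Fin n)) : ℕ :=
  (Finset.univ.filter (fun p : Fin n × Fin n => p.1 < p.2 ∧ σ p.2 < σ p.1)).card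

def sT (n i : ℕ) : Equiv.Perm (Fin n) :=
  if h : 1 ≤ i ∧ i < n then Equiv.swap ⟨i - 1, by omega⟩ ⟨i, h.2⟩ else 1

/-!
Since `σ ∈ Z_k` is increasing on each of the blocks `[0, k)`, `[k, n - k)`, `[n - k, n)`, for every
block-preserving `τ` the inversions of `στ` are those of `τ` together with those of `σ` pulled back
by `τ`, so `ℓ(στ) = ℓ(σ) + ℓ(τ)`. Both `α` and `αc` with `c ∈ W(C_k)` preserve the blocks, and it
remains to see `ℓ(α) ≤ ℓ(αc)`. All inversions of `α` lie in the first block; on the last block `αc`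
acts as `c` does on the first. Writing `invᵢ` for the number of inversions inside the `i`-th block,
which is subadditive and invariant under inversion on permutations stabilising the block,
`ℓ(αc) ≥ inv₁(αc) + inv₃(αc) = inv₁(αc) + inv₁(c⁻¹) ≥ inv₁(αc · c⁻¹) = ℓ(α)`.
-/

open Finset Equiv

namespace Equiv.Perm

variable {α : Type*} [LinearOrder α]

lemma swap_lt_swap_of_covBy {a b p q : α} (hab : a ⋖ b) (hpq : p < q) (hne : (p, q) ≠ (a, b)) :
    swap a b p < swap a b q := by
  have hb : ∀ c, a < c → b ≤ c := fun c hc => not_lt.1 (hab.2 hc)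
  have ha : ∀ c, c < b → c ≤ a := fun c hc => not_lt.1 fun h => hab.2 h hc
  have := hab.lt
  simp only [swap_apply_def]
  split_ifs <;> grind

variable [Fintype α]

def inversions (π : Perm α) : Finset (α × α) :=
  univ.filter fun p => p.1 < p.2 ∧ π p.2 < π p.1

@[simp]
lemma mem_inversions {π : Perm α} {p : α × α} : p ∈ inversions π ↔ p.1 < p.2 ∧ π p.2 < π p.1 := by
  simp [inversions]

lemma card_inversions_mul_swap {σ : Perm α} {a b : α} (hab : a ⋖ b) (hσ : σ a < σ b) :
    #(inversions (σ * swap a b)) = #(inversions σ) + 1 := by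
  set s := swap a b
  have hmap :
      inversions (σ * s) = insert (a, b) ((inversions σ).map (s.prodCongr s).toEmbedding) := by
    ext ⟨p, q⟩
    simp only [mem_inversions, mem_insert, mem_map, Equiv.coe_toEmbedding, Prod.exists,
      Equiv.prodCongr_apply, Prod.map, Prod.mk.injEq, Perm.mul_apply]
    constructor
    · rintro ⟨hpq, hσpq⟩
      by_cases hp : (p, q) = (a, b)
      · exact Or.inl (by simpa using hp)
      · refine Or.inr ⟨s p, s q, ⟨swap_lt_swap_of_covBy hab hpq hp, hσpq⟩, by simp [s]⟩
    · rintro (⟨rfl, rfl⟩ | ⟨p', q', ⟨hpq', hσpq'⟩, rfl, rfl⟩)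
      · simp [s, hab.lt, hσ]
      · refine ⟨swap_lt_swap_of_covBy hab hpq' ?_, by simpa [s] using hσpq'⟩
        rintro ⟨⟩; exact hσ.not_gt hσpq'
  rw [hmap, card_insert_of_notMem, card_map]
  simp only [mem_map, mem_inversions, not_exists, not_and]
  rintro ⟨p, q⟩ ⟨hpq, -⟩ h
  simp [s, Prod.ext_iff, swap_apply_eq_iff] at h
  exact hpq.not_gt (h.2 ▸ h.1 ▸ hab.lt)

lemma lt_of_card_inversions_mul_swap {σ : Perm α} {a b : α} (hab : a ⋖ b)
    (h : #(inversions (σ * swap a b)) = #(inversions σ) + 1) : σ a < σ b := by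
  refine lt_of_le_of_ne (not_lt.1 fun hba => ?_) (σ.injective.ne hab.ne)
  have := card_inversions_mul_swap (σ := σ * swap a b) hab (by simpa using hba)
  rw [mul_assoc, swap_mul_self, mul_one] at this
  omega

lemma card_inversions_mul {β : Type*} [PartialOrder β] {b : α → β} (hb : Monotone b)
    {σ τ : Perm α} (hσ : ∀ j, StrictMonoOn σ (b ⁻¹' {j})) (hτ : ∀ x, b (τ x) = b x) :
    #(inversions (σ * τ)) = #(inversions σ) + #(inversions τ) := by
  have fiber_of_inv : ∀ {p q}, (p, q) ∈ inversions τ → b p = b q := by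
    intro p q h
    rw [mem_inversions] at h
    exact le_antisymm (hb h.1.le) (by simpa [hτ] using hb h.2.le)
  have lt_of_inv : ∀ {p q}, (p, q) ∈ inversions σ → b p < b q := by
    intro p q h
    rw [mem_inversions] at h
    refine lt_of_le_of_ne (hb h.1.le) fun he => h.2.not_gt ?_
    exact hσ (b p) rfl (show b q = b p from he.symm) h.1
  have hsame : (inversions (σ * τ)).filter (fun p => τ p.2 < τ p.1) = inversions τ := by
    ext ⟨p, q⟩
    simp only [mem_filter, mem_inversions, Perm.mul_apply]
    refine ⟨fun h => ⟨h.1.1, h.2⟩, fun h => ⟨⟨h.1, ?_⟩, h.2⟩⟩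
    have hpq := fiber_of_inv (mem_inversions.2 h)
    exact hσ (b p) (show b (τ q) = b p by rw [hτ, hpq]) (hτ p) h.2
  have hcross : (inversions (σ * τ)).filter (fun p => ¬ τ p.2 < τ p.1) =
      (inversions σ).map (τ.prodCongr τ).symm.toEmbedding := by
    ext ⟨p, q⟩
    simp only [mem_filter, mem_inversions, Perm.mul_apply, mem_map_equiv, Equiv.symm_symm,
      Equiv.prodCongr_apply, Prod.map]
    constructor
    · rintro ⟨⟨-, h⟩, h'⟩
      exact ⟨lt_of_le_of_ne (not_lt.1 h') (τ.injective.ne fun he => by simp_all), h⟩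
    · rintro ⟨h, h'⟩
      have := lt_of_inv (mem_inversions.2 ⟨h, h'⟩)
      rw [hτ, hτ] at this
      exact ⟨⟨hb.reflect_lt this, h'⟩, h.not_gt⟩
  rw [← card_filter_add_card_filter_not (fun p : α × α => τ p.2 < τ p.1), hsame, hcross,
    card_map, add_comm]

def inversionsOn (s : Finset α) (π : Perm α) : Finset (α × α) :=
  (inversions π).filter fun p => p.1 ∈ s ∧ p.2 ∈ s

@[simp]
lemma mem_inversionsOn {s : Finset α} {π : Perm α} {p : α × α} :
    p ∈ inversionsOn s π ↔ p.1 ∈ s ∧ p.2 ∈ s ∧ p.1 < p.2 ∧ π p.2 < π p.1 := by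
  simp [inversionsOn, and_comm, and_assoc]

variable {s t : Finset α}

lemma inversionsOn_congr {π ρ : Perm α} (h : ∀ x ∈ s, π x = ρ x) :
    inversionsOn s π = inversionsOn s ρ := by
  ext ⟨p, q⟩
  simp +contextual [h]

lemma card_inversionsOn_add_le (hst : _root_.Disjoint s t) (π : Perm α) :
    #(inversionsOn s π) + #(inversionsOn t π) ≤ #(inversions π) := by
  rw [← card_union_of_disjoint]
  · exact card_le_card (union_subset (filter_subset _ _) (filter_subset _ _))
  · exact disjoint_filter_filter' _ _ fun _ hs ht p hp =>
      disjoint_left.1 hst (hs p hp).1 (ht p hp).1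

lemma inversions_eq_inversionsOn {π : Perm α} (hs : IsLowerSet (s : Set α))
    (hπ : ∀ x ∉ s, π x = x) : inversions π = inversionsOn s π := by
  have hπs : ∀ x ∈ s, π x ∈ s := fun x hx => by
    by_contra h
    rw [π.injective (hπ _ h)] at h
    exact h hx
  ext ⟨p, q⟩
  simp only [mem_inversions, mem_inversionsOn]
  refine ⟨fun ⟨hpq, hπpq⟩ => ?_, fun h => h.2.2⟩
  by_cases hq : q ∈ s
  · exact ⟨hs hpq.le hq, hq, hpq, hπpq⟩
  rw [hπ q hq] at hπpq
  by_cases hp : p ∈ s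
  · exact absurd (hs hπpq.le (hπs p hp)) hq
  · exact absurd (hπ p hp ▸ hπpq) hpq.not_gt

lemma card_inversionsOn_mul_le {π ρ : Perm α} (hρ : ∀ x ∈ s, ρ x ∈ s) :
    #(inversionsOn s (π * ρ)) ≤ #(inversionsOn s π) + #(inversionsOn s ρ) := by
  let T := (inversionsOn s (π * ρ)).filter fun p => ρ p.1 < ρ p.2
  have hsub : inversionsOn s (π * ρ) ⊆ T ∪ inversionsOn s ρ := by
    intro ⟨p, q⟩ h
    rw [mem_inversionsOn] at h
    rcases lt_or_gt_of_ne (ρ.injective.ne h.2.2.1.ne) with hlt | hgt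
    · exact mem_union_left _ (mem_filter.2 ⟨mem_inversionsOn.2 h, hlt⟩)
    · exact mem_union_right _ (mem_inversionsOn.2 ⟨h.1, h.2.1, h.2.2.1, hgt⟩)
  have hT : #T ≤ #(inversionsOn s π) := by
    refine card_le_card_of_injOn (Prod.map ρ ρ) (fun ⟨p, q⟩ h => ?_) ?_
    · simp only [T, coe_filter, mem_inversionsOn, Perm.mul_apply] at h
      simp only [mem_coe, mem_inversionsOn, Prod.map]
      exact ⟨hρ p h.1.1, hρ q h.1.2.1, h.2, h.1.2.2.2⟩
    · exact (ρ.injective.prodMap ρ.injective).injOn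
  calc #(inversionsOn s (π * ρ)) ≤ #(T ∪ inversionsOn s ρ) := card_le_card hsub
    _ ≤ #T + #(inversionsOn s ρ) := card_union_le _ _
    _ ≤ _ := by omega

lemma card_inversionsOn_inv {π : Perm α} (hπ : ∀ x ∈ s, π x ∈ s) :
    #(inversionsOn s π⁻¹) = #(inversionsOn s π) := by
  have hπinv : ∀ x ∈ s, π⁻¹ x ∈ s := fun x hx => perm_symm_on_of_perm_on_finset hπ hx
  refine card_nbij' (fun p => (π⁻¹ p.2, π⁻¹ p.1)) (fun p => (π p.2, π p.1)) ?_ ?_ ?_ ?_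
  · intro ⟨p, q⟩ h
    simp only [mem_coe, mem_inversionsOn] at h ⊢
    exact ⟨hπinv q h.2.1, hπinv p h.1, h.2.2.2, by simpa using h.2.2.1⟩
  · intro ⟨p, q⟩ h
    simp only [mem_coe, mem_inversionsOn] at h ⊢
    exact ⟨hπ q h.2.1, hπ p h.1, h.2.2.2, by simpa using h.2.2.1⟩
  · intro p _; simp
  · intro p _; simp

lemma card_inversionsOn_image {π : Perm α} {e : α → α} (he : StrictMonoOn e s)
    (hπ : ∀ x ∈ s, π x ∈ s) (hπe : ∀ x ∈ s, π (e x) = e (π x)) :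
    #(inversionsOn (s.image e) π) = #(inversionsOn s π) := by
  have himage : inversionsOn (s.image e) π = (inversionsOn s π).image (Prod.map e e) := by
    ext ⟨p, q⟩
    simp only [mem_inversionsOn, mem_image, Prod.exists, Prod.map, Prod.mk.injEq]
    constructor
    · rintro ⟨⟨a, ha, rfl⟩, ⟨b, hb, rfl⟩, hab, hπab⟩
      rw [hπe a ha, hπe b hb] at hπab
      exact ⟨a, b, ⟨ha, hb, (he.lt_iff_lt ha hb).1 hab,
        (he.lt_iff_lt (hπ b hb) (hπ a ha)).1 hπab⟩, rfl, rfl⟩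
    · rintro ⟨a, b, ⟨ha, hb, hab, hπab⟩, rfl, rfl⟩
      refine ⟨⟨a, ha, rfl⟩, ⟨b, hb, rfl⟩, he ha hb hab, ?_⟩
      rw [hπe a ha, hπe b hb]
      exact he (hπ b hb) (hπ a ha) hπab
  rw [himage, card_image_of_injOn]
  intro ⟨a, b⟩ hab ⟨c, d⟩ hcd h
  simp only [mem_coe, mem_inversionsOn, Prod.map, Prod.mk.injEq] at hab hcd h
  exact Prod.ext (he.injOn hab.1 hcd.1 h.1) (he.injOn hab.2.1 hcd.2.1 h.2)

end Equiv.Perm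

lemma permLength_eq_card_inversions {n : ℕ} (σ : Perm (Fin n)) :
    permLength n σ = #(σ.inversions) := rfl

namespace ThreeBlocks

def block (n k i : ℕ) : ℕ := if i < k then 0 else if i < n - k then 1 else 2

variable {n k : ℕ}

lemma block_mono : Monotone (block n k) := by
  intro i j hij
  simp only [block]
  split_ifs <;> omega

lemma block_val_mono : Monotone fun x : Fin n => block n k x :=
  fun _ _ hxy => block_mono (Fin.val_le_of_le hxy)

lemma block_eq_zero_iff {i : ℕ} : block n k i = 0 ↔ i < k := by
  simp only [block]
  split_ifs <;> simp <;> omega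

lemma lt_of_block_eq {i j : ℕ} (h : block n k i = block n k j) (hj : j < k) : i < k :=
  block_eq_zero_iff.1 (h.trans (block_eq_zero_iff.2 hj))

lemma sT_eq_swap {i : ℕ} (h1 : 1 ≤ i) (h2 : i < n) :
    sT n i = swap ⟨i - 1, by omega⟩ ⟨i, h2⟩ := by
  rw [sT, dif_pos ⟨h1, h2⟩]

lemma sT_apply_val {i : ℕ} (h1 : 1 ≤ i) (h2 : i < n) (x : Fin n) :
    (sT n i x : ℕ) = if (x : ℕ) = i - 1 then i else if (x : ℕ) = i then i - 1 else x := by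
  rw [sT_eq_swap h1 h2, swap_apply_def]
  split_ifs <;> simp only [Fin.ext_iff] at * <;> omega

lemma strictMonoOn_block_fiber (h : 2 * k ≤ n) {σ : Perm (Fin n)}
    (hσ : ∀ i : ℕ, 1 ≤ i → i < n → i ≠ k → i ≠ n - k →
      permLength n (σ * sT n i) = permLength n σ + 1) (j : ℕ) :
    StrictMonoOn σ ((fun x : Fin n => block n k x) ⁻¹' {j}) := by
  refine strictMonoOn_of_lt_succ (Set.ordConnected_singleton.preimage_mono block_val_mono)
    fun a ha haj hsj => ?_
  set b := Order.succ a
  have hab : a ⋖ b := Order.covBy_succ_of_not_isMax ha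
  have hsucc : (b : ℕ) = a + 1 := (Nat.covBy_iff_add_one_eq.1 (Fin.covBy_iff.1 hab)).symm
  have hblock : block n k a = block n k (a + 1) := by
    rw [← hsucc]; exact haj.trans hsj.symm
  have hlt : (a : ℕ) + 1 < n := hsucc ▸ b.isLt
  have hswap : sT n (a + 1) = swap a b := by
    rw [sT_eq_swap (by omega) hlt]
    congr 1
    ext
    simp [hsucc]
  apply Perm.lt_of_card_inversions_mul_swap hab
  rw [← hswap]
  refine hσ _ (by omega) hlt ?_ ?_ <;> intro he <;> simp only [block] at hblock <;>
    split_ifs at hblock <;> omega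

/-- Only used on `x < k`, where it is `x ↦ x + (n - k)`; the `% n` merely makes it total. -/
def shift (n k : ℕ) (x : Fin n) : Fin n := ⟨(x + (n - k)) % n, Nat.mod_lt _ x.pos⟩

lemma shift_val {x : Fin n} (hx : (x : ℕ) < k) : (shift n k x : ℕ) = x + (n - k) :=
  Nat.mod_eq_of_lt (by omega)

/-- Contains `W(C_k)`: permutations preserving the blocks and acting on the last block as on the
first one. -/
def blockDiagonal (n k : ℕ) : Subgroup (Perm (Fin n)) where
  carrier := {π | (∀ x, block n k (π x) = block n k x) ∧
    ∀ x : Fin n, (x : ℕ) < k → π (shift n k x) = shift n k (π x)}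
  one_mem' := ⟨fun _ => rfl, fun _ _ => rfl⟩
  mul_mem' := by
    rintro π ρ ⟨hπ, hπs⟩ ⟨hρ, hρs⟩
    refine ⟨fun x => by simp only [Perm.mul_apply, hπ, hρ], fun x hx => ?_⟩
    simp only [Perm.mul_apply, hρs x hx, hπs _ (lt_of_block_eq (hρ x) hx)]
  inv_mem' := by
    rintro π ⟨hπ, hπs⟩
    have hinv : ∀ x, block n k (π⁻¹ x) = block n k x := fun x => by
      simpa using (hπ (π⁻¹ x)).symm
    refine ⟨hinv, fun x hx => π.injective ?_⟩
    rw [hπs _ (lt_of_block_eq (hinv x) hx)]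
    simp

lemma sT_mul_sT_mem_blockDiagonal (h : 2 * k ≤ n) {j : ℕ} (hj1 : 1 ≤ j) (hj2 : j ≤ k - 1) :
    sT n j * sT n (n - k + j) ∈ blockDiagonal n k := by
  have S1 := sT_apply_val (n := n) hj1 (by omega)
  have S2 := sT_apply_val (n := n) (i := n - k + j) (by omega) (by omega)
  refine ⟨fun x => ?_, fun x hx => Fin.ext ?_⟩
  · simp only [Perm.mul_apply, S1, S2, block]
    split_ifs <;> omega
  · have hy : ((sT n j * sT n (n - k + j)) x : ℕ) < k := by
      simp only [Perm.mul_apply, S1, S2]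
      split_ifs <;> omega
    rw [shift_val hy]
    simp only [Perm.mul_apply, S1, S2, shift_val hx]
    split_ifs <;> omega

lemma sT_mem_blockDiagonal {i : ℕ} (hi1 : k + 1 ≤ i) (hi2 : i ≤ n - k - 1) :
    sT n i ∈ blockDiagonal n k := by
  have S := sT_apply_val (n := n) (i := i) (by omega) (by omega)
  refine ⟨fun x => ?_, fun x hx => Fin.ext ?_⟩
  · simp only [S, block]
    split_ifs <;> omega
  · have hy : (sT n i x : ℕ) < k := by
      simp only [S]
      split_ifs <;> omega
    rw [shift_val hy, S, shift_val hx]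
    simp only [S]
    split_ifs <;> omega

lemma sT_mem_fixingSubgroup {i : ℕ} (hi1 : 1 ≤ i) (hi2 : i ≤ k - 1) :
    sT n i ∈ fixingSubgroup (Perm (Fin n)) {x : Fin n | k ≤ (x : ℕ)} := by
  rw [mem_fixingSubgroup_iff]
  intro x (hx : k ≤ (x : ℕ))
  rw [Perm.smul_def, Fin.ext_iff, sT_apply_val hi1 (by omega)]
  split_ifs <;> omega

lemma block_apply_of_mem_fixingSubgroup {α : Perm (Fin n)}
    (hα : α ∈ fixingSubgroup (Perm (Fin n)) {x : Fin n | k ≤ (x : ℕ)}) (x : Fin n) :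
    block n k (α x) = block n k x := by
  have hfix : ∀ y : Fin n, k ≤ (y : ℕ) → α y = y := (mem_fixingSubgroup_iff _).1 hα
  by_cases hx : k ≤ (x : ℕ)
  · rw [hfix x hx]
  have hαx : ((α x : Fin n) : ℕ) < k := by
    by_contra hαx
    rw [α.injective (hfix _ (not_lt.1 hαx))] at hαx
    exact hαx (not_le.1 hx)
  rw [block_eq_zero_iff.2 hαx, block_eq_zero_iff.2 (not_le.1 hx)]

lemma closure_le_fixingSubgroup :
    Subgroup.closure {w : Perm (Fin n) | ∃ i : ℕ, 1 ≤ i ∧ i ≤ k - 1 ∧ w = sT n i} ≤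
      fixingSubgroup (Perm (Fin n)) {x : Fin n | k ≤ (x : ℕ)} := by
  rw [Subgroup.closure_le]
  rintro _ ⟨i, hi1, hi2, rfl⟩
  exact sT_mem_fixingSubgroup hi1 hi2

lemma closure_le_blockDiagonal (h : 2 * k ≤ n) :
    Subgroup.closure
      ({w : Perm (Fin n) | ∃ j : ℕ, 1 ≤ j ∧ j ≤ k - 1 ∧ w = sT n j * sT n (n - k + j)} ∪
        {w : Perm (Fin n) | ∃ i : ℕ, k + 1 ≤ i ∧ i ≤ n - k - 1 ∧ w = sT n i}) ≤
      blockDiagonal n k := by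
  rw [Subgroup.closure_le]
  rintro _ (⟨j, hj1, hj2, rfl⟩ | ⟨i, hi1, hi2, rfl⟩)
  · exact sT_mul_sT_mem_blockDiagonal h hj1 hj2
  · exact sT_mem_blockDiagonal hi1 hi2

lemma card_inversions_le_mul_of_mem (h : 2 * k ≤ n) {α c : Perm (Fin n)}
    (hα : α ∈ fixingSubgroup (Perm (Fin n)) {x : Fin n | k ≤ (x : ℕ)})
    (hc : c ∈ blockDiagonal n k) : #(Perm.inversions α) ≤ #(Perm.inversions (α * c)) := by
  obtain ⟨hc_block, hc_shift⟩ := hc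
  set lo := univ.filter fun x : Fin n => (x : ℕ) < k
  set hi := lo.image (shift n k)
  have hlo_lower : IsLowerSet (lo : Set (Fin n)) := fun a b hba ha => by
    simp only [lo, coe_filter, mem_univ, true_and, Set.mem_ofPred_eq] at ha ⊢
    exact lt_of_le_of_lt hba ha
  have hα_fix : ∀ x ∉ lo, α x = x := fun x hx => by
    simpa [lo] using ((mem_fixingSubgroup_iff _).1 hα) x (by simpa [lo] using hx)
  have hc_lo : ∀ x ∈ lo, c x ∈ lo := fun x hx => by
    simp only [lo, mem_filter, mem_univ, true_and] at hx ⊢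
    exact lt_of_block_eq (hc_block x) hx
  have hshift_mono : StrictMonoOn (shift n k) lo := fun a ha b hb hab => by
    simp only [lo, coe_filter, mem_univ, true_and, Set.mem_ofPred_eq] at ha hb
    rw [Fin.lt_def, shift_val ha, shift_val hb]
    exact Nat.add_lt_add_right hab _
  have hc_shift' : ∀ x ∈ lo, c (shift n k x) = shift n k (c x) := fun x hx =>
    hc_shift x (by simpa [lo] using hx)
  have hhi_ge : ∀ x ∈ hi, n - k ≤ (x : ℕ) := by
    simp only [hi, lo, mem_image, mem_filter, mem_univ, true_and]
    rintro _ ⟨y, hy, rfl⟩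
    rw [shift_val hy]
    omega
  have hdisj : Disjoint lo hi := disjoint_left.2 fun x hlo hhi => by
    have := hhi_ge x hhi
    simp only [lo, mem_filter, mem_univ, true_and] at hlo
    omega
  have hαc_hi : ∀ x ∈ hi, (α * c) x = c x := by
    simp only [hi, mem_image]
    rintro _ ⟨y, hy, rfl⟩
    rw [Perm.mul_apply, hc_shift' y hy]
    refine hα_fix _ fun hlo => disjoint_left.1 hdisj hlo (mem_image_of_mem _ (hc_lo y hy))
  calc #(Perm.inversions α)
      = #(Perm.inversionsOn lo (α * c * c⁻¹)) := by
        rw [mul_inv_cancel_right, Perm.inversions_eq_inversionsOn hlo_lower hα_fix]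
    _ ≤ #(Perm.inversionsOn lo (α * c)) + #(Perm.inversionsOn lo c⁻¹) :=
        Perm.card_inversionsOn_mul_le fun x hx => Perm.perm_symm_on_of_perm_on_finset hc_lo hx
    _ = #(Perm.inversionsOn lo (α * c)) + #(Perm.inversionsOn hi (α * c)) := by
        rw [Perm.card_inversionsOn_inv hc_lo, Perm.inversionsOn_congr hαc_hi,
          Perm.card_inversionsOn_image hshift_mono hc_lo hc_shift']
    _ ≤ #(Perm.inversions (α * c)) := Perm.card_inversionsOn_add_le hdisj _

end ThreeBlocks

open ThreeBlocks

/-- `W(C_k) = ⟨s_j s_{n-k+j} (1 ≤ j ≤ k-1), s_i (k+1 ≤ i ≤ n-k-1)⟩`.  If `σ ∈ Z_k`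
(minimal coset representative of `S_n/W(L)`) and `α ∈ W_k = ⟨s_1,…,s_{k-1}⟩`, then `σα`
has minimal length in its left coset `σα·W(C_k)`. -/
theorem stmt_5 (n k : ℕ) (h : 2 * k ≤ n) (σ α : Equiv.Perm (Fin n))
    (hσ : ∀ i : ℕ, 1 ≤ i → i < n → i ≠ k → i ≠ n - k →
      permLength n (σ * sT n i) = permLength n σ + 1)
    (hα : α ∈ Subgroup.closure
      {w : Equiv.Perm (Fin n) | ∃ i : ℕ, 1 ≤ i ∧ i ≤ k - 1 ∧ w = sT n i}) :
    ∀ w : Equiv.Perm (Fin n),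
      (σ * α)⁻¹ * w ∈ Subgroup.closure
        ({w' : Equiv.Perm (Fin n) | ∃ j : ℕ, 1 ≤ j ∧ j ≤ k - 1 ∧ w' = sT n j * sT n (n - k + j)} ∪
          {w' : Equiv.Perm (Fin n) | ∃ i : ℕ, k + 1 ≤ i ∧ i ≤ n - k - 1 ∧ w' = sT n i}) →
      permLength n (σ * α) ≤ permLength n w := by
  intro w hw
  obtain ⟨c, hc, rfl⟩ : ∃ c ∈ blockDiagonal n k, w = σ * α * c :=
    ⟨_, closure_le_blockDiagonal h hw, by group⟩
  have hα_fix := closure_le_fixingSubgroup hα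
  have hσ_mono := strictMonoOn_block_fiber h hσ
  have hα_block := block_apply_of_mem_fixingSubgroup hα_fix
  rw [permLength_eq_card_inversions, permLength_eq_card_inversions, mul_assoc,
    Perm.card_inversions_mul block_val_mono hσ_mono hα_block,
    Perm.card_inversions_mul block_val_mono hσ_mono (by simp [hα_block, hc.1])]
  exact Nat.add_le_add_left (card_inversions_le_mul_of_mem h hα_fix hc) _
end

section
/- A matrix u with u² = 0 and rk(u) = k lies in the B-orbit of x_k (B the upper-triangular Borel in GL_n) if and only if Ker(u) = span(e_1,…,e_{n-k}) and u(span(e_{n-k+1},…,e_{n-k+j})) = span(e_1,…,e_j) for all j = 1,…,k. -/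
open Matrix

/-- The span of the standard basis vectors `e_i`, `i ∈ S`. -/
def coordSpan (K : Type*) [Field K] (n : ℕ) (S : Set (Fin n)) : Submodule K (Fin n → K) where
  carrier := {v | ∀ i, i ∉ S → v i = 0}
  add_mem' := by intro a b ha hb i hi; simp [Pi.add_apply, ha i hi, hb i hi]
  zero_mem' := by intro i _; rfl
  smul_mem' := by intro c a ha i hi; simp [Pi.smul_apply, ha i hi]

/-!
Write `F_m` for the span of the first `m` basis vectors. An invertible upper-triangular `b`
preserves every `F_m`, and `x_k` maps `F_{n-k+j}` onto `F_j` with kernel `F_{n-k}`; hence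
`b x_k b⁻¹` satisfies the two conditions. Conversely, the conditions let us pick
`v_j ∈ span(e_{n-k+1},…,e_{n-k+j+1})` with `u v_j = e_{j+1}` and nonzero last coordinate. The
matrix `b` with columns `e_1,…,e_{n-k},v_0,…,v_{k-1}` is upper triangular with nonzero diagonal,
and `u b = b x_k` because `u` kills `F_{n-k}` and, as `2k ≤ n`, `e_{j+1} ∈ F_{n-k}` is itself a
column of `b`.
-/

section CoordSpan

variable {K : Type*} [Field K] {n : ℕ}

theorem mem_coordSpan {S : Set (Fin n)} {v : Fin n → K} :
    v ∈ coordSpan K n S ↔ ∀ i, i ∉ S → v i = 0 := Iff.rfl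

theorem single_mem_coordSpan {S : Set (Fin n)} {i : Fin n} (hi : i ∈ S) (a : K) :
    Pi.single i a ∈ coordSpan K n S :=
  fun _ hj => Pi.single_eq_of_ne' (ne_of_mem_of_not_mem hi hj) _

theorem coordSpan_union (S T : Set (Fin n)) :
    coordSpan K n (S ∪ T) = coordSpan K n S ⊔ coordSpan K n T := by
  refine le_antisymm (fun v hv => ?_) (sup_le (fun v hv i hi => hv i fun h => hi (Or.inl h))
    (fun v hv i hi => hv i fun h => hi (Or.inr h)))
  rw [← S.indicator_self_add_compl v]
  refine Submodule.add_mem_sup (fun i hi => Set.indicator_of_notMem hi v) (fun i hi => ?_)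
  by_cases hiS : i ∈ S
  · exact Set.indicator_of_notMem (Set.notMem_compl_iff.2 hiS) v
  · rw [Set.indicator_of_mem (Set.mem_compl hiS)]
    exact hv i fun h => h.elim hiS hi

theorem isLowerSet_setOf_val_lt (m : ℕ) : IsLowerSet {i : Fin n | (i : ℕ) < m} :=
  fun _ _ hba ha => lt_of_le_of_lt (Fin.le_iff_val_le_val.1 hba) ha

theorem Matrix.IsUpperTriangular.mulVec_mem_coordSpan {M : Matrix (Fin n) (Fin n) K}
    (hM : M.IsUpperTriangular) {S : Set (Fin n)} (hS : IsLowerSet S) {v : Fin n → K}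
    (hv : v ∈ coordSpan K n S) : M *ᵥ v ∈ coordSpan K n S := by
  intro i hi
  show ∑ c, M i c * v c = 0
  refine Finset.sum_eq_zero fun c _ => ?_
  by_cases hc : c ∈ S
  · rw [hM (lt_of_not_ge fun hic => hi (hS hic hc)), zero_mul]
  · rw [hv c hc, mul_zero]

end CoordSpan

section Borel

variable {K : Type*} [Field K] {n : ℕ}

theorem Matrix.IsUpperTriangular.coe_inv {b : GL (Fin n) K}
    (hb : (b : Matrix (Fin n) (Fin n) K).IsUpperTriangular) :
    ((b⁻¹ : GL (Fin n) K) : Matrix (Fin n) (Fin n) K).IsUpperTriangular := by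
  rw [coe_units_inv]
  have := b.invertible
  exact blockTriangular_inv_of_blockTriangular hb

theorem map_mulVecLin_coordSpan_of_isUpperTriangular {b : GL (Fin n) K}
    (hb : (b : Matrix (Fin n) (Fin n) K).IsUpperTriangular) {S : Set (Fin n)}
    (hS : IsLowerSet S) :
    (coordSpan K n S).map (b : Matrix (Fin n) (Fin n) K).mulVecLin = coordSpan K n S := by
  refine le_antisymm ?_ fun w hw =>
    ⟨(b⁻¹ : GL (Fin n) K) *ᵥ w, hb.coe_inv.mulVec_mem_coordSpan hS hw, ?_⟩
  · rintro _ ⟨v, hv, rfl⟩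
    exact hb.mulVec_mem_coordSpan hS hv
  · simp [mulVec_mulVec]

theorem comap_mulVecLin_coordSpan_of_isUpperTriangular {b : GL (Fin n) K}
    (hb : (b : Matrix (Fin n) (Fin n) K).IsUpperTriangular) {S : Set (Fin n)}
    (hS : IsLowerSet S) :
    (coordSpan K n S).comap (b : Matrix (Fin n) (Fin n) K).mulVecLin = coordSpan K n S := by
  refine le_antisymm (fun v hv => ?_) fun v => hb.mulVec_mem_coordSpan hS
  simpa [mulVec_mulVec] using hb.coe_inv.mulVec_mem_coordSpan hS hv

end Borel

section Nilpotent

variable {K : Type*} [Field K] {n k : ℕ}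

theorem xk_mulVec_apply (v : Fin n → K) (r : Fin n) :
    (xk K n k *ᵥ v) r = if h : (r : ℕ) + (n - k) < n then v ⟨r + (n - k), h⟩ else 0 := by
  simp only [mulVec, dotProduct, xk]
  split_ifs with h
  · rw [Finset.sum_eq_single ⟨r + (n - k), h⟩ (fun c _ hc => by
      rw [if_neg fun he => hc (Fin.ext he.symm), zero_mul]) (by simp)]
    simp
  · exact Finset.sum_eq_zero fun c _ => by rw [if_neg (by have := c.isLt; omega), zero_mul]

theorem mul_xk_apply (A : Matrix (Fin n) (Fin n) K) (i c : Fin n) :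
    (A * xk K n k) i c =
      if h : n - k ≤ (c : ℕ) then A i ⟨c - (n - k), by omega⟩ else 0 := by
  simp only [mul_apply, xk]
  split_ifs with h
  · rw [Finset.sum_eq_single ⟨c - (n - k), by omega⟩ (fun m _ hm => by
      rw [if_neg fun he => hm (Fin.ext (by simp; omega)), mul_zero]) (by simp)]
    rw [if_pos (by simp; omega), mul_one]
  · exact Finset.sum_eq_zero fun m _ => by rw [if_neg (by omega), mul_zero]

theorem ker_xk : LinearMap.ker (xk K n k).mulVecLin = coordSpan K n {i | (i : ℕ) < n - k} := by
  ext v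
  simp only [LinearMap.mem_ker, mulVecLin_apply, mem_coordSpan, funext_iff, xk_mulVec_apply,
    Pi.zero_apply, Set.mem_ofPred_eq, not_lt]
  refine ⟨fun hv i hi => ?_, fun hv r => ?_⟩
  · have := hv ⟨i - (n - k), by omega⟩
    rwa [dif_pos (by simp; omega), show (⟨i - (n - k) + (n - k), _⟩ : Fin n) = i from
      Fin.ext (by simp; omega)] at this
  · split_ifs
    exacts [hv _ (by simp), rfl]

theorem map_xk_coordSpan {j : ℕ} (hj : j ≤ k) :
    (coordSpan K n {i | (i : ℕ) < n - k + j}).map (xk K n k).mulVecLin =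
      coordSpan K n {i | (i : ℕ) < j} := by
  refine le_antisymm ?_ fun w hw =>
    ⟨fun i => if h : n - k ≤ (i : ℕ) then w ⟨i - (n - k), by omega⟩ else 0,
      fun i hi => ?_, funext fun r => ?_⟩
  · rintro _ ⟨v, hv, rfl⟩ r hr
    rw [mulVecLin_apply, xk_mulVec_apply]
    split_ifs
    exacts [hv _ (by simp at hr ⊢; omega), rfl]
  · simp only [Set.mem_ofPred_eq, not_lt] at hi
    simp only [dif_pos (show n - k ≤ (i : ℕ) by omega)]
    exact hw _ (by simp; omega)
  · rw [mulVecLin_apply, xk_mulVec_apply]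
    split_ifs with h h'
    · exact congrArg w (Fin.ext (by simp))
    · simp at h'
    · refine (hw r ?_).symm
      simp only [Set.mem_ofPred_eq, not_lt]
      omega

end Nilpotent

section Orbit

variable {K : Type*} [Field K] {n k : ℕ}

theorem map_coordSpan_Ico_eq_of_ker {f : (Fin n → K) →ₗ[K] Fin n → K} {a : ℕ}
    (hf : LinearMap.ker f = coordSpan K n {i | (i : ℕ) < a}) (j : ℕ) :
    (coordSpan K n {i | a ≤ (i : ℕ) ∧ (i : ℕ) < a + j}).map f =
      (coordSpan K n {i | (i : ℕ) < a + j}).map f := by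
  have hunion : {i : Fin n | (i : ℕ) < a + j} =
      {i : Fin n | (i : ℕ) < a} ∪ {i | a ≤ (i : ℕ) ∧ (i : ℕ) < a + j} := by
    ext
    simp only [Set.mem_ofPred_eq, Set.mem_union]
    omega
  rw [hunion, coordSpan_union, Submodule.map_sup, ← hf, LinearMap.le_ker_iff_map.1 le_rfl,
    bot_sup_eq]

theorem ker_conj_xk {b : GL (Fin n) K} (hb : (b : Matrix (Fin n) (Fin n) K).IsUpperTriangular) :
    LinearMap.ker ((b : Matrix (Fin n) (Fin n) K) * xk K n k *
        ((b⁻¹ : GL (Fin n) K) : Matrix (Fin n) (Fin n) K)).mulVecLin =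
      coordSpan K n {i | (i : ℕ) < n - k} := by
  rw [mulVecLin_mul, mulVecLin_mul, LinearMap.ker_comp, LinearMap.ker_comp_of_ker_eq_bot _
    (LinearMap.ker_eq_bot.2 (mulVec_injective_of_isUnit b.isUnit)), ker_xk,
    comap_mulVecLin_coordSpan_of_isUpperTriangular hb.coe_inv (isLowerSet_setOf_val_lt _)]

theorem map_conj_xk_coordSpan {b : GL (Fin n) K}
    (hb : (b : Matrix (Fin n) (Fin n) K).IsUpperTriangular) {j : ℕ} (hj : j ≤ k) :
    (coordSpan K n {i | (i : ℕ) < n - k + j}).map ((b : Matrix (Fin n) (Fin n) K) * xk K n k *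
        ((b⁻¹ : GL (Fin n) K) : Matrix (Fin n) (Fin n) K)).mulVecLin =
      coordSpan K n {i | (i : ℕ) < j} := by
  rw [mulVecLin_mul, mulVecLin_mul, Submodule.map_comp, Submodule.map_comp,
    map_mulVecLin_coordSpan_of_isUpperTriangular hb.coe_inv (isLowerSet_setOf_val_lt _),
    map_xk_coordSpan hj,
    map_mulVecLin_coordSpan_of_isUpperTriangular hb (isLowerSet_setOf_val_lt _)]

theorem exists_mulVec_eq_single {u : Matrix (Fin n) (Fin n) K}
    (hmap : ∀ j : ℕ, 1 ≤ j → j ≤ k →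
      (coordSpan K n {i | n - k ≤ (i : ℕ) ∧ (i : ℕ) < n - k + j}).map u.mulVecLin =
        coordSpan K n {i | (i : ℕ) < j})
    (c : Fin n) (hc : n - k ≤ (c : ℕ)) :
    ∃ v ∈ coordSpan K n {i | i ≤ c}, v c ≠ 0 ∧
      u *ᵥ v = Pi.single ⟨c - (n - k), by omega⟩ 1 := by
  obtain ⟨v, hv, huv⟩ : Pi.single ⟨c - (n - k), by omega⟩ (1 : K) ∈
      (coordSpan K n {i | n - k ≤ (i : ℕ) ∧ (i : ℕ) < n - k + (c - (n - k) + 1)}).map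
        u.mulVecLin := by
    rw [hmap _ le_add_self (by omega)]
    exact single_mem_coordSpan (by simp) 1
  refine ⟨v, fun i hi => hv i fun h => hi (by simp at h ⊢; omega), fun hvc => ?_, huv⟩
  have hv' :
      v ∈ coordSpan K n {i | n - k ≤ (i : ℕ) ∧ (i : ℕ) < n - k + (c - (n - k))} := by
    intro i hi
    rcases eq_or_ne i c with rfl | hic
    · exact hvc
    · exact hv i fun h => hi (by have := Fin.val_ne_of_ne hic; simp at h ⊢; omega)
  have huv' : u *ᵥ v ∈ coordSpan K n {i | (i : ℕ) < c - (n - k)} := by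
    rcases Nat.eq_zero_or_pos (c - (n - k)) with hc0 | hc0
    · rw [show v = 0 from funext fun i => hv' i (by simp; omega), mulVec_zero]
      exact zero_mem _
    · rw [← hmap _ hc0 (by omega)]
      exact ⟨v, hv', rfl⟩
  rw [← mulVecLin_apply, huv] at huv'
  simpa using huv' ⟨c - (n - k), by omega⟩ (by simp)

theorem exists_isUpperTriangular_mul_eq_mul_xk (hk : 2 * k ≤ n) {u : Matrix (Fin n) (Fin n) K}
    (hker : LinearMap.ker u.mulVecLin = coordSpan K n {i | (i : ℕ) < n - k})
    (hmap : ∀ j : ℕ, 1 ≤ j → j ≤ k →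
      (coordSpan K n {i | n - k ≤ (i : ℕ) ∧ (i : ℕ) < n - k + j}).map u.mulVecLin =
        coordSpan K n {i | (i : ℕ) < j}) :
    ∃ B : Matrix (Fin n) (Fin n) K, B.IsUpperTriangular ∧ (∀ i, B i i ≠ 0) ∧
      u * B = B * xk K n k := by
  choose v hv_mem hv_diag hv_eq using exists_mulVec_eq_single hmap
  let col (c : Fin n) : Fin n → K := if hc : n - k ≤ (c : ℕ) then v c hc else Pi.single c 1
  have hcol : ∀ c, col c ∈ coordSpan K n {i | i ≤ c} ∧ col c c ≠ 0 := by
    intro c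
    by_cases hc : n - k ≤ (c : ℕ)
    · simp only [col, dif_pos hc]
      exact ⟨hv_mem c hc, hv_diag c hc⟩
    · simp only [col, dif_neg hc]
      exact ⟨single_mem_coordSpan (S := {i | i ≤ c}) (by simp) 1, by simp⟩
  refine ⟨of fun i c => col c i, fun i c hci => (hcol c).1 i (not_le.2 hci),
    fun c => (hcol c).2, ?_⟩
  ext i c
  rw [mul_xk_apply, show (u * of fun i c => col c i) i c = (u *ᵥ col c) i by
    simp [mul_apply, mulVec, dotProduct]]
  by_cases hc : n - k ≤ (c : ℕ)
  · simp only [col, dif_pos hc, hv_eq, of_apply]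
    rw [dif_neg (by simp; omega)]
  · have hcker : Pi.single c (1 : K) ∈ LinearMap.ker u.mulVecLin :=
      hker ▸ single_mem_coordSpan (by simp; omega) 1
    simp only [col, dif_neg hc]
    exact congrFun (LinearMap.mem_ker.1 hcker) i

end Orbit

theorem stmt_8_general (K : Type*) [Field K] (n k : ℕ) (h : 2 * k ≤ n)
    (u : Matrix (Fin n) (Fin n) K) :
    (∃ b : GL (Fin n) K,
        (∀ i j : Fin n, j < i → (b : Matrix (Fin n) (Fin n) K) i j = 0) ∧
        u = (b : Matrix (Fin n) (Fin n) K) * xk K n k *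
              ((b⁻¹ : GL (Fin n) K) : Matrix (Fin n) (Fin n) K)) ↔
      (LinearMap.ker u.mulVecLin = coordSpan K n {i | (i : ℕ) < n - k} ∧
        ∀ j : ℕ, 1 ≤ j → j ≤ k →
          Submodule.map u.mulVecLin
              (coordSpan K n {i | n - k ≤ (i : ℕ) ∧ (i : ℕ) < n - k + j}) =
            coordSpan K n {i | (i : ℕ) < j}) := by
  constructor
  · rintro ⟨b, hb, rfl⟩
    have hb : (b : Matrix (Fin n) (Fin n) K).IsUpperTriangular := fun i j hij => hb i j hij
    refine ⟨ker_conj_xk hb, fun j _ hj => ?_⟩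
    rw [map_coordSpan_Ico_eq_of_ker (ker_conj_xk hb), map_conj_xk_coordSpan hb hj]
  · rintro ⟨hker, hmap⟩
    obtain ⟨B, hB, hdiag, huB⟩ := exists_isUpperTriangular_mul_eq_mul_xk h hker hmap
    have hdet : B.det ≠ 0 := by
      rw [det_of_isUpperTriangular hB]
      exact Finset.prod_ne_zero_iff.2 fun i _ => hdiag i
    refine ⟨GeneralLinearGroup.mkOfDetNeZero B hdet, fun i j hij => hB hij, ?_⟩
    rw [coe_units_inv, GeneralLinearGroup.val_mkOfDetNeZero, ← huB,
      mul_nonsing_inv_cancel_right _ _ (isUnit_iff_ne_zero.2 hdet)]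

/-- `u ∈ O_k` lies in the `B`-orbit of `x_k` (`B` = upper-triangular Borel) iff
`Ker(u) = span(e_1,…,e_{n-k})` and `u(span(e_{n-k+1},…,e_{n-k+j})) = span(e_1,…,e_j)`
for all `j = 1,…,k`. -/
theorem stmt_8 (K : Type*) [Field K] (n k : ℕ) (h : 2 * k ≤ n)
    (u : Matrix (Fin n) (Fin n) K) (hu : u * u = 0) (hrk : u.rank = k) :
    (∃ b : GL (Fin n) K,
        (∀ i j : Fin n, j < i → (b : Matrix (Fin n) (Fin n) K) i j = 0) ∧
        u = (b : Matrix (Fin n) (Fin n) K) * xk K n k *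
              ((b⁻¹ : GL (Fin n) K) : Matrix (Fin n) (Fin n) K)) ↔
      (LinearMap.ker u.mulVecLin = coordSpan K n {i | (i : ℕ) < n - k} ∧
        ∀ j : ℕ, 1 ≤ j → j ≤ k →
          Submodule.map u.mulVecLin
              (coordSpan K n {i | n - k ≤ (i : ℕ) ∧ (i : ℕ) < n - k + j}) =
            coordSpan K n {i | (i : ℕ) < j}) :=
  stmt_8_general K n k h u
end

section
/- The set Y⁰ = {b·x_k·b⁻¹ : b ∈ B} is closed in O_k = {u ∈ gl_n : u² = 0, rk(u) = k} with respect to the Zariski topology (equivalently: Y⁰ equals the intersection of O_k with a Zariski-closed subset of gl_n). -/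
/-!
Write `ι` for the inclusion of the first `k` coordinates of `Kⁿ` and `π'` for the projection
onto the last `k`, so that `x_k = ι π'`. The closed conditions are `u i j = 0` for
`j < i + (n - k)`: `x_k` satisfies them and conjugation by upper triangular matrices preserves
them. Conversely, such a `u` equals `ι T π'` for its upper-right `k × k` block `T`, which is
upper triangular, and invertible because `rk u = k`. Then `b = ι T π + (1 - ι π)`, with `π` the
projection onto the first `k` coordinates, is upper triangular and invertible, and
`b x_k = u = u b`, the last equality because `π' ι = 0` when `2k ≤ n`.
-/

open Matrix

namespace Matrix

section OneSubmatrix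

variable {R ι ι' κ κ' : Type*} [Semiring R] [DecidableEq κ] [DecidableEq κ']

theorem one_submatrix_mul_one_submatrix [Fintype κ] (f : ι → κ) (g : ι' → κ) :
    (1 : Matrix κ κ R).submatrix f id * (1 : Matrix κ κ R).submatrix id g =
      (1 : Matrix κ κ R).submatrix f g := by
  simpa using (submatrix_mul (1 : Matrix κ κ R) 1 f id g Function.bijective_id).symm

theorem one_submatrix_mul_one_submatrix_self [Fintype κ] [DecidableEq ι] {f : ι → κ}
    (hf : Function.Injective f) :
    (1 : Matrix κ κ R).submatrix f id * (1 : Matrix κ κ R).submatrix id f = 1 := by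
  rw [one_submatrix_mul_one_submatrix, submatrix_one f hf]

theorem one_submatrix_eq_zero {f : ι → κ} {g : ι' → κ} (h : ∀ i j, f i ≠ g j) :
    (1 : Matrix κ κ R).submatrix f g = 0 :=
  ext fun i j => one_apply_ne (h i j)

theorem one_submatrix_mul_apply_self [Fintype ι] {α : Type*} {f : ι → κ}
    (hf : Function.Injective f) (M : Matrix ι α R) (a : ι) (c : α) :
    ((1 : Matrix κ κ R).submatrix id f * M) (f a) c = M a c := by
  rw [mul_apply, Fintype.sum_eq_single a fun i hi => ?_]
  · simp [one_apply]
  · simp [(hf.ne hi).symm]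

theorem one_submatrix_mul_apply_of_notMem [Fintype ι] {α : Type*} {f : ι → κ}
    (M : Matrix ι α R) {r : κ} (hr : r ∉ Set.range f) (c : α) :
    ((1 : Matrix κ κ R).submatrix id f * M) r c = 0 := by
  rw [mul_apply]
  refine Finset.sum_eq_zero fun i _ => ?_
  rw [submatrix_apply, id_eq, one_apply_ne fun h => hr ⟨i, h.symm⟩, zero_mul]

theorem mul_one_submatrix_apply_self [Fintype ι'] {α : Type*} {g : ι' → κ'}
    (hg : Function.Injective g) (M : Matrix α ι' R) (r : α) (b : ι') :
    (M * (1 : Matrix κ' κ' R).submatrix g id) r (g b) = M r b := by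
  rw [mul_apply, Fintype.sum_eq_single b fun j hj => ?_]
  · simp [one_apply]
  · simp [hg.ne hj]

theorem mul_one_submatrix_apply_of_notMem [Fintype ι'] {α : Type*} {g : ι' → κ'}
    (M : Matrix α ι' R) (r : α) {c : κ'} (hc : c ∉ Set.range g) :
    (M * (1 : Matrix κ' κ' R).submatrix g id) r c = 0 := by
  rw [mul_apply]
  refine Finset.sum_eq_zero fun j _ => ?_
  rw [submatrix_apply, id_eq, one_apply_ne fun h => hc ⟨j, h⟩, mul_zero]

theorem eq_one_submatrix_mul_submatrix_mul [Fintype ι] [Fintype ι'] {f : ι → κ}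
    {g : ι' → κ'} (hf : Function.Injective f) (hg : Function.Injective g) (A : Matrix κ κ' R)
    (hA : ∀ r c, A r c ≠ 0 → r ∈ Set.range f ∧ c ∈ Set.range g) :
    A = (1 : Matrix κ κ R).submatrix id f * A.submatrix f g *
      (1 : Matrix κ' κ' R).submatrix g id := by
  rw [Matrix.mul_assoc]
  ext r c
  by_cases hr : r ∈ Set.range f
  · obtain ⟨a, rfl⟩ := hr
    rw [one_submatrix_mul_apply_self hf]
    by_cases hc : c ∈ Set.range g
    · obtain ⟨b, rfl⟩ := hc
      rw [mul_one_submatrix_apply_self hg, submatrix_apply]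
    · rw [mul_one_submatrix_apply_of_notMem _ _ hc]
      exact not_imp_comm.mp (hA _ c) fun h => hc h.2
  · rw [one_submatrix_mul_apply_of_notMem _ hr]
    exact not_imp_comm.mp (hA r c) fun h => hr h.1

end OneSubmatrix

section Corner

variable {R m k : Type*} [Ring R] [Fintype m] [DecidableEq m] [Fintype k] [DecidableEq k]

/-- Acts as `T` on the image of the projection `E * E'` and as the identity on its kernel. -/
def cornerHom (E : Matrix m k R) (E' : Matrix k m R) (h : E' * E = 1) :
    Matrix k k R →* Matrix m m R where
  toFun T := E * T * E' + (1 - E * E')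
  map_one' := by rw [Matrix.mul_one, add_sub_cancel]
  map_mul' T S := by
    have hE : ∀ X : Matrix k m R, E' * (E * X) = X := fun X => by
      rw [← Matrix.mul_assoc, h, Matrix.one_mul]
    simp only [Matrix.mul_add, Matrix.add_mul, Matrix.mul_sub, Matrix.sub_mul, Matrix.mul_one,
      Matrix.one_mul, Matrix.mul_assoc, hE]
    abel

theorem cornerHom_apply (E : Matrix m k R) (E' : Matrix k m R) (h : E' * E = 1)
    (T : Matrix k k R) : cornerHom E E' h T = E * T * E' + (1 - E * E') :=
  rfl

theorem cornerHom_mul_self (E : Matrix m k R) (E' : Matrix k m R) (h : E' * E = 1)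
    (T : Matrix k k R) : cornerHom E E' h T * E = E * T := by
  simp only [cornerHom_apply, Matrix.add_mul, Matrix.sub_mul,
    Matrix.one_mul, Matrix.mul_assoc, h, Matrix.mul_one, sub_self, add_zero]

theorem mul_cornerHom_of_mul_eq_zero {l : Type*} (E : Matrix m k R) (E' : Matrix k m R)
    (h : E' * E = 1) {F : Matrix l m R} (hF : F * E = 0) (T : Matrix k k R) :
    F * cornerHom E E' h T = F := by
  simp only [cornerHom_apply, Matrix.mul_add, Matrix.mul_sub,
    Matrix.mul_one, ← Matrix.mul_assoc, hF, Matrix.zero_mul, zero_add, sub_zero]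

end Corner

theorem rank_mul_mul_of_mul_eq_one {R m k k' m' : Type*} [CommRing R] [StrongRankCondition R]
    [Fintype m] [Fintype k] [Fintype k'] [Fintype m'] [DecidableEq k] [DecidableEq k']
    {E : Matrix m k R} {E' : Matrix k m R} {F : Matrix k' m' R} {F' : Matrix m' k' R}
    (hE : E' * E = 1) (hF : F * F' = 1) (T : Matrix k k' R) : (E * T * F).rank = T.rank := by
  refine le_antisymm ((rank_mul_le_left _ _).trans (rank_mul_le_right _ _)) ?_
  have hT : E' * (E * T * F) * F' = T := by
    rw [← Matrix.mul_assoc, ← Matrix.mul_assoc, hE, Matrix.one_mul, Matrix.mul_assoc, hF,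
      Matrix.mul_one]
  calc T.rank = (E' * (E * T * F) * F').rank := by rw [hT]
    _ ≤ (E * T * F).rank := (rank_mul_le_left _ _).trans (rank_mul_le_right _ _)

theorem isUnit_of_rank_eq_card {K ι : Type*} [Field K] [Fintype ι] [DecidableEq ι]
    {A : Matrix ι ι K} (h : A.rank = Fintype.card ι) : IsUnit A := by
  rw [← mulVec_surjective_iff_isUnit, ← coe_mulVecLin, ← LinearMap.range_eq_top]
  apply Submodule.eq_top_of_finrank_eq
  rw [show Module.finrank K (LinearMap.range A.mulVecLin) = A.rank from rfl, h,
    Module.finrank_fintype_fun_eq_card]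

section ZeroBelowSuperdiag

variable {R : Type*} {a b c : ℕ}

def ZeroBelowSuperdiag [Zero R] (m : ℕ) (A : Matrix (Fin a) (Fin b) R) : Prop :=
  ∀ (i : Fin a) (j : Fin b), (j : ℕ) < i + m → A i j = 0

theorem zeroBelowSuperdiag_zero_iff [Zero R] {A : Matrix (Fin a) (Fin a) R} :
    ZeroBelowSuperdiag 0 A ↔ A.BlockTriangular id :=
  Iff.rfl

theorem ZeroBelowSuperdiag.mul [NonUnitalNonAssocSemiring R] {p q : ℕ}
    {A : Matrix (Fin a) (Fin b) R} {B : Matrix (Fin b) (Fin c) R}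
    (hA : ZeroBelowSuperdiag p A) (hB : ZeroBelowSuperdiag q B) :
    ZeroBelowSuperdiag (p + q) (A * B) := by
  intro i j hij
  rw [mul_apply]
  refine Finset.sum_eq_zero fun s _ => ?_
  by_cases hs : (s : ℕ) < i + p
  · rw [hA i s hs, zero_mul]
  · rw [hB s j (by omega), mul_zero]

theorem ZeroBelowSuperdiag.add [AddZeroClass R] {m : ℕ} {A B : Matrix (Fin a) (Fin b) R}
    (hA : ZeroBelowSuperdiag m A) (hB : ZeroBelowSuperdiag m B) :
    ZeroBelowSuperdiag m (A + B) := fun i j hij => by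
  rw [add_apply, hA i j hij, hB i j hij, add_zero]

theorem ZeroBelowSuperdiag.sub [SubNegZeroMonoid R] {m : ℕ} {A B : Matrix (Fin a) (Fin b) R}
    (hA : ZeroBelowSuperdiag m A) (hB : ZeroBelowSuperdiag m B) :
    ZeroBelowSuperdiag m (A - B) := fun i j hij => by
  rw [sub_apply, hA i j hij, hB i j hij, sub_zero]

theorem zeroBelowSuperdiag_one_submatrix [Zero R] [One R] {m : ℕ} {f : Fin a → Fin c}
    {g : Fin b → Fin c} (h : ∀ (i : Fin a) (j : Fin b), f i = g j → (i : ℕ) + m ≤ j) :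
    ZeroBelowSuperdiag m ((1 : Matrix (Fin c) (Fin c) R).submatrix f g) :=
  fun i j hij => one_apply_ne fun e => by have := h i j e; omega

theorem zeroBelowSuperdiag_one [Zero R] [One R] :
    ZeroBelowSuperdiag 0 (1 : Matrix (Fin a) (Fin a) R) :=
  fun _ _ hij => one_apply_ne (Fin.ne_of_gt hij)

theorem ZeroBelowSuperdiag.conj [CommRing R] {m : ℕ} {A : Matrix (Fin a) (Fin a) R}
    (hA : ZeroBelowSuperdiag m A) (b : (Matrix (Fin a) (Fin a) R)ˣ)
    (hb : BlockTriangular (b : Matrix (Fin a) (Fin a) R) id) :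
    ZeroBelowSuperdiag m ((b : Matrix (Fin a) (Fin a) R) * A *
      ((b⁻¹ : (Matrix (Fin a) (Fin a) R)ˣ) : Matrix (Fin a) (Fin a) R)) := by
  have hb' : BlockTriangular ((b⁻¹ : (Matrix (Fin a) (Fin a) R)ˣ) : Matrix (Fin a) (Fin a) R)
      id := by
    have := b.invertible
    rw [coe_units_inv]
    exact blockTriangular_inv_of_blockTriangular hb
  simpa using
    ((zeroBelowSuperdiag_zero_iff.mpr hb).mul hA).mul (zeroBelowSuperdiag_zero_iff.mpr hb')

end ZeroBelowSuperdiag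

end Matrix

def Fin.natAddSub {n k : ℕ} (h : k ≤ n) (i : Fin k) : Fin n := ⟨n - k + i, by omega⟩

theorem Fin.natAddSub_injective {n k : ℕ} (h : k ≤ n) : Function.Injective (Fin.natAddSub h) :=
  fun i j hij => Fin.ext (by simpa [Fin.natAddSub] using hij)

section NilpotentOrbit

variable {K : Type*} [Field K] {n k : ℕ}

theorem zeroBelowSuperdiag_xk : ZeroBelowSuperdiag (n - k) (xk K n k) :=
  fun _ _ hij => if_neg (by omega)

theorem eq_mul_submatrix_mul_of_zeroBelowSuperdiag {R : Type*} [Semiring R] (h : k ≤ n)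
    {A : Matrix (Fin n) (Fin n) R} (hA : ZeroBelowSuperdiag (n - k) A) :
    A = (1 : Matrix (Fin n) (Fin n) R).submatrix id (Fin.castLE h) *
      A.submatrix (Fin.castLE h) (Fin.natAddSub h) *
        (1 : Matrix (Fin n) (Fin n) R).submatrix (Fin.natAddSub h) id := by
  refine eq_one_submatrix_mul_submatrix_mul (Fin.castLE_injective h) (Fin.natAddSub_injective h)
    A fun r c hrc => ?_
  have hr : (r : ℕ) < k := by
    by_contra hr
    exact hrc (hA r c (by omega))
  have hc : n - k ≤ c := by
    by_contra hc
    exact hrc (hA r c (by omega))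
  refine ⟨⟨⟨r, hr⟩, rfl⟩, ⟨⟨c - (n - k), by omega⟩, Fin.ext ?_⟩⟩
  simp only [Fin.natAddSub]
  omega

theorem xk_eq_mul (h : k ≤ n) :
    xk K n k = (1 : Matrix (Fin n) (Fin n) K).submatrix id (Fin.castLE h) *
      (1 : Matrix (Fin n) (Fin n) K).submatrix (Fin.natAddSub h) id := by
  have hblock : (xk K n k).submatrix (Fin.castLE h) (Fin.natAddSub h) = 1 := by
    ext i j
    simp only [submatrix_apply, xk, Fin.val_castLE, Fin.natAddSub, one_apply, Fin.ext_iff]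
    exact if_congr (by omega) rfl rfl
  conv_lhs => rw [eq_mul_submatrix_mul_of_zeroBelowSuperdiag h zeroBelowSuperdiag_xk, hblock,
    Matrix.mul_one]

theorem one_submatrix_natAddSub_mul_castLE {R : Type*} [Semiring R] (h : 2 * k ≤ n) :
    (1 : Matrix (Fin n) (Fin n) R).submatrix (Fin.natAddSub (by omega : k ≤ n)) id *
      (1 : Matrix (Fin n) (Fin n) R).submatrix id (Fin.castLE (by omega : k ≤ n)) = 0 := by
  rw [one_submatrix_mul_one_submatrix, one_submatrix_eq_zero fun i j e => ?_]
  have := congrArg Fin.val e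
  simp only [Fin.natAddSub, Fin.val_castLE] at this
  omega

theorem xk_mul_xk (h : 2 * k ≤ n) : xk K n k * xk K n k = 0 := by
  rw [xk_eq_mul (by omega), Matrix.mul_assoc, ← Matrix.mul_assoc _ _ (submatrix 1 _ id),
    one_submatrix_natAddSub_mul_castLE h, Matrix.zero_mul, Matrix.mul_zero]

theorem rank_xk (h : k ≤ n) : (xk K n k).rank = k := by
  rw [xk_eq_mul h, ← Matrix.mul_one (submatrix 1 id (Fin.castLE h)),
    rank_mul_mul_of_mul_eq_one (one_submatrix_mul_one_submatrix_self (Fin.castLE_injective h))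
      (one_submatrix_mul_one_submatrix_self (Fin.natAddSub_injective h)),
    rank_one, Fintype.card_fin]

theorem blockTriangular_submatrix_castLE_natAddSub {R : Type*} [Zero R] (h : k ≤ n)
    {A : Matrix (Fin n) (Fin n) R} (hA : ZeroBelowSuperdiag (n - k) A) :
    (A.submatrix (Fin.castLE h) (Fin.natAddSub h)).BlockTriangular id :=
  fun i j (hij : j < i) => hA _ _ (by simp only [Fin.val_castLE, Fin.natAddSub]; omega)

theorem blockTriangular_cornerHom_castLE {R : Type*} [Ring R] (h : k ≤ n)
    {T : Matrix (Fin k) (Fin k) R} (hT : T.BlockTriangular id) :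
    (cornerHom ((1 : Matrix (Fin n) (Fin n) R).submatrix id (Fin.castLE h))
      ((1 : Matrix (Fin n) (Fin n) R).submatrix (Fin.castLE h) id)
      (one_submatrix_mul_one_submatrix_self (Fin.castLE_injective h)) T).BlockTriangular id := by
  have hι : ZeroBelowSuperdiag 0 ((1 : Matrix (Fin n) (Fin n) R).submatrix id (Fin.castLE h)) :=
    zeroBelowSuperdiag_one_submatrix fun _ _ e => (congrArg Fin.val e).le
  have hπ : ZeroBelowSuperdiag 0 ((1 : Matrix (Fin n) (Fin n) R).submatrix (Fin.castLE h) id) :=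
    zeroBelowSuperdiag_one_submatrix fun _ _ e => (congrArg Fin.val e).le
  rw [← zeroBelowSuperdiag_zero_iff, cornerHom_apply]
  simpa using ((hι.mul (zeroBelowSuperdiag_zero_iff.mpr hT)).mul hπ).add
    (zeroBelowSuperdiag_one.sub (hι.mul hπ))

theorem exists_blockTriangular_conj_xk (h : 2 * k ≤ n) {u : Matrix (Fin n) (Fin n) K}
    (hu : ZeroBelowSuperdiag (n - k) u) (hrk : u.rank = k) :
    ∃ b : GL (Fin n) K, BlockTriangular (b : Matrix (Fin n) (Fin n) K) id ∧
      u = b * xk K n k * ((b⁻¹ : GL (Fin n) K) : Matrix (Fin n) (Fin n) K) := by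
  have hk : k ≤ n := by omega
  set ι := (1 : Matrix (Fin n) (Fin n) K).submatrix id (Fin.castLE hk)
  set π := (1 : Matrix (Fin n) (Fin n) K).submatrix (Fin.castLE hk) id
  set T := u.submatrix (Fin.castLE hk) (Fin.natAddSub hk)
  have hπι : π * ι = 1 := one_submatrix_mul_one_submatrix_self (Fin.castLE_injective hk)
  have huT : u = ι * T * (1 : Matrix (Fin n) (Fin n) K).submatrix (Fin.natAddSub hk) id :=
    eq_mul_submatrix_mul_of_zeroBelowSuperdiag hk hu
  have hrkT : u.rank = T.rank := by
    rw [huT]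
    exact rank_mul_mul_of_mul_eq_one hπι
      (one_submatrix_mul_one_submatrix_self (Fin.natAddSub_injective hk)) T
  obtain ⟨t, ht⟩ : IsUnit T := isUnit_of_rank_eq_card (by rw [← hrkT, hrk, Fintype.card_fin])
  let b : GL (Fin n) K := Units.map (cornerHom ι π hπι) t
  have hbx : (b : Matrix (Fin n) (Fin n) K) * xk K n k = u := by
    rw [xk_eq_mul hk, ← Matrix.mul_assoc, Units.coe_map, cornerHom_mul_self, ht, ← huT]
  have hub : u * b = u := by
    conv_lhs => rw [huT, Matrix.mul_assoc]
    rw [Units.coe_map, mul_cornerHom_of_mul_eq_zero _ _ _ (one_submatrix_natAddSub_mul_castLE h),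
      ← huT]
  refine ⟨b, ?_, ?_⟩
  · rw [Units.coe_map, ht]
    exact blockTriangular_cornerHom_castLE hk (blockTriangular_submatrix_castLE_natAddSub hk hu)
  · calc u = u * b * (b⁻¹ : GL (Fin n) K) := by
          rw [Matrix.mul_assoc, Units.mul_inv, Matrix.mul_one]
      _ = b * xk K n k * (b⁻¹ : GL (Fin n) K) := by rw [hub, hbx]

end NilpotentOrbit

theorem stmt_9_general (K : Type*) [Field K] (n k : ℕ) (h : 2 * k ≤ n) :
    ∃ S : Set (MvPolynomial (Fin n × Fin n) K),
      {u : Matrix (Fin n) (Fin n) K | ∃ b : GL (Fin n) K,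
          (∀ i j : Fin n, j < i → (b : Matrix (Fin n) (Fin n) K) i j = 0) ∧
          u = (b : Matrix (Fin n) (Fin n) K) * xk K n k *
                ((b⁻¹ : GL (Fin n) K) : Matrix (Fin n) (Fin n) K)} =
        {u : Matrix (Fin n) (Fin n) K | u * u = 0 ∧ u.rank = k} ∩
          {u : Matrix (Fin n) (Fin n) K |
            ∀ p ∈ S, MvPolynomial.eval (fun q : Fin n × Fin n => u q.1 q.2) p = 0} := by
  refine ⟨MvPolynomial.X '' {q | (q.2 : ℕ) < q.1 + (n - k)}, ?_⟩
  have hS (u : Matrix (Fin n) (Fin n) K) : (∀ p ∈ MvPolynomial.X '' {q : Fin n × Fin n |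
      (q.2 : ℕ) < q.1 + (n - k)}, MvPolynomial.eval (fun q => u q.1 q.2) p = 0) ↔
      ZeroBelowSuperdiag (n - k) u := by
    simp only [Set.forall_mem_image, Set.mem_ofPred_eq, MvPolynomial.eval_X, Prod.forall]
    rfl
  ext u
  simp only [Set.mem_ofPred_eq, Set.mem_inter_iff, hS]
  constructor
  · rintro ⟨b, hb, rfl⟩
    refine ⟨⟨?_, ?_⟩, zeroBelowSuperdiag_xk.conj b hb⟩
    · rw [← sq, Units.conj_pow, sq, xk_mul_xk h, Matrix.mul_zero, Matrix.zero_mul]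
    · rw [rank_mul_mul_of_mul_eq_one b.inv_mul b.inv_mul, rank_xk (by omega)]
  · rintro ⟨⟨-, hrk⟩, hu⟩
    exact exists_blockTriangular_conj_xk h hu hrk

/-- `Y⁰ = {b·x_k·b⁻¹ : b ∈ B}` is Zariski-closed in `O_k = {u² = 0, rk u = k}`:
it equals the intersection of `O_k` with the common zero locus of a set of
polynomials in the matrix entries. -/
theorem stmt_9 (K : Type*) [Field K] [IsAlgClosed K] (n k : ℕ) (h : 2 * k ≤ n) :
    ∃ S : Set (MvPolynomial (Fin n × Fin n) K),
      {u : Matrix (Fin n) (Fin n) K | ∃ b : GL (Fin n) K,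
          (∀ i j : Fin n, j < i → (b : Matrix (Fin n) (Fin n) K) i j = 0) ∧
          u = (b : Matrix (Fin n) (Fin n) K) * xk K n k *
                ((b⁻¹ : GL (Fin n) K) : Matrix (Fin n) (Fin n) K)} =
        {u : Matrix (Fin n) (Fin n) K | u * u = 0 ∧ u.rank = k} ∩
          {u : Matrix (Fin n) (Fin n) K |
            ∀ p ∈ S, MvPolynomial.eval (fun q : Fin n × Fin n => u q.1 q.2) p = 0} :=
  stmt_9_general K n k h
end

section
/- For any k ≥ 1, the permutation σ = s₂s₁s₃ = (3,1,4,2) ∈ S₄ (in one-line notation, σ(1)=3, σ(2)=1, σ(3)=4, σ(4)=2) contains the pattern (3,1,4,2), and any minimal coset representative σ ∈ Z₁ ⊆ S_n whose maximal coset representative σo₁ contains the pattern (3,4,1,2) must itself contain the pattern (3,1,4,2), and conversely. -/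
/-!
On the positions `1, …, n-2` (0-indexed) `σ` is increasing and `σ * o₁` is decreasing, so in an
occurrence of either pattern the two outer positions cannot lie there: they are `0` and `n-1`,
which `o₁` fixes. Since `o₁` reverses the inner positions, it carries an occurrence of `(3,1,4,2)`
at `(0, i₂, i₃, n-1)` in `σ` to an occurrence of `(3,4,1,2)` at `(0, o₁ i₃, o₁ i₂, n-1)` in
`σ * o₁`, and back, because `o₁` is an involution.
-/

/-- `τ` contains the pattern `(3,4,1,2)`: indices `i₁<i₂<i₃<i₄` with
`τ(i₂) > τ(i₁) > τ(i₄) > τ(i₃)`. -/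
def pat3412 {n : ℕ} (τ : Equiv.Perm (Fin n)) : Prop :=
  ∃ i₁ i₂ i₃ i₄ : Fin n, i₁ < i₂ ∧ i₂ < i₃ ∧ i₃ < i₄ ∧
    τ i₁ < τ i₂ ∧ τ i₄ < τ i₁ ∧ τ i₃ < τ i₄

/-- `τ` contains the pattern `(3,1,4,2)`: indices `i₁<i₂<i₃<i₄` with
`τ(i₃) > τ(i₁) > τ(i₄) > τ(i₂)`. -/
def pat3142 {n : ℕ} (τ : Equiv.Perm (Fin n)) : Prop :=
  ∃ i₁ i₂ i₃ i₄ : Fin n, i₁ < i₂ ∧ i₂ < i₃ ∧ i₃ < i₄ ∧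
    τ i₁ < τ i₃ ∧ τ i₄ < τ i₁ ∧ τ i₂ < τ i₄

open Equiv Set Function

/-- The positions `2, …, n-1` (1-indexed) on which `W(L)` acts. -/
def middle (n : ℕ) : Set (Fin n) := {i | 1 ≤ (i : ℕ) ∧ (i : ℕ) < n - 1}

section Middle

variable {n : ℕ} {i j k : Fin n}

lemma mem_middle_of_lt_of_lt (hij : i < j) (hjk : j < k) : j ∈ middle n := by
  rw [Fin.lt_def] at hij hjk
  exact ⟨by omega, by omega⟩

lemma lt_of_notMem_middle_of_lt (hi : i ∉ middle n) (hij : i < j) (hk : k ∈ middle n) :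
    i < k := by
  simp only [middle, mem_ofPred_eq, not_and, not_lt] at hi hk
  rw [Fin.lt_def] at hij ⊢
  omega

lemma lt_of_notMem_middle_of_gt (hi : i ∉ middle n) (hji : j < i) (hk : k ∈ middle n) :
    k < i := by
  simp only [middle, mem_ofPred_eq, not_and, not_lt] at hi hk
  rw [Fin.lt_def] at hji ⊢
  omega

end Middle

section Reversal

variable {n : ℕ} {o : Fin n → Fin n}
  (ho : ∀ i : Fin n, (o i : ℕ) = if (i : ℕ) = 0 ∨ (i : ℕ) = n - 1 then (i : ℕ) else n - 1 - i)
include ho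

lemma apply_eq_self_of_notMem_middle {i : Fin n} (hi : i ∉ middle n) : o i = i := by
  simp only [middle, mem_ofPred_eq, not_and, not_lt] at hi
  ext
  rw [ho, if_pos (by omega)]

lemma val_apply_of_mem_middle {i : Fin n} (hi : i ∈ middle n) : (o i : ℕ) = n - 1 - i := by
  rw [ho, if_neg (by obtain ⟨h₁, h₂⟩ := hi; omega)]

lemma mapsTo_middle : MapsTo o (middle n) (middle n) := fun i hi => by
  have := val_apply_of_mem_middle ho hi
  obtain ⟨h₁, h₂⟩ := hi
  exact ⟨by omega, by omega⟩

lemma strictAntiOn_middle : StrictAntiOn o (middle n) := fun i hi j hj hij => by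
  rw [Fin.lt_def, val_apply_of_mem_middle ho hi, val_apply_of_mem_middle ho hj]
  rw [Fin.lt_def] at hij
  obtain ⟨-, hj⟩ := hj
  omega

lemma involutive_of_reversal : Involutive o := fun i => by
  by_cases hi : i ∈ middle n
  · ext
    have hoi := val_apply_of_mem_middle ho hi
    rw [val_apply_of_mem_middle ho (mapsTo_middle ho hi), hoi]
    obtain ⟨-, h⟩ := hi
    omega
  · rw [apply_eq_self_of_notMem_middle ho hi, apply_eq_self_of_notMem_middle ho hi]

end Reversal

section Patterns

variable {n : ℕ} {s : Set (Fin n)}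

lemma notMem_of_pat3142_at {σ : Perm (Fin n)} (hσ : StrictMonoOn σ s) {i₁ i₂ i₃ i₄ : Fin n}
    (h12 : i₁ < i₂) (h34 : i₃ < i₄) (h₂ : i₂ ∈ s) (h₃ : i₃ ∈ s)
    (h13 : σ i₁ < σ i₃) (h41 : σ i₄ < σ i₁) (h24 : σ i₂ < σ i₄) : i₁ ∉ s ∧ i₄ ∉ s :=
  ⟨fun h₁ => (hσ h₁ h₂ h12).asymm (h24.trans h41),
    fun h₄ => (hσ h₃ h₄ h34).asymm (h41.trans h13)⟩

lemma notMem_of_pat3412_at {τ : Perm (Fin n)} (hτ : StrictAntiOn τ s) {j₁ j₂ j₃ j₄ : Fin n}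
    (h12 : j₁ < j₂) (h34 : j₃ < j₄) (h₂ : j₂ ∈ s) (h₃ : j₃ ∈ s)
    (h12' : τ j₁ < τ j₂) (h34' : τ j₃ < τ j₄) : j₁ ∉ s ∧ j₄ ∉ s :=
  ⟨fun h₁ => (hτ h₁ h₂ h12).asymm h12', fun h₄ => (hτ h₃ h₄ h34).asymm h34'⟩

variable {o : Perm (Fin n)} (ho_fix : ∀ i ∉ middle n, o i = i)
  (ho_maps : MapsTo o (middle n) (middle n)) (ho_anti : StrictAntiOn o (middle n))
  (ho_inv : Involutive o)
include ho_fix ho_maps ho_anti ho_inv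

lemma pat3412_mul_of_pat3142 {σ : Perm (Fin n)} (hσ : StrictMonoOn σ (middle n))
    (h : pat3142 σ) : pat3412 (σ * o) := by
  obtain ⟨i₁, i₂, i₃, i₄, h12, h23, h34, h13, h41, h24⟩ := h
  have h₂ := mem_middle_of_lt_of_lt h12 h23
  have h₃ := mem_middle_of_lt_of_lt h23 h34
  obtain ⟨h₁, h₄⟩ := notMem_of_pat3142_at hσ h12 h34 h₂ h₃ h13 h41 h24
  refine ⟨i₁, o i₃, o i₂, i₄, lt_of_notMem_middle_of_lt h₁ h12 (ho_maps h₃),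
    ho_anti h₂ h₃ h23, lt_of_notMem_middle_of_gt h₄ h34 (ho_maps h₂), ?_, ?_, ?_⟩ <;>
  simpa only [Perm.mul_apply, ho_inv _, ho_fix _ h₁, ho_fix _ h₄]

lemma pat3142_mul_of_pat3412 {τ : Perm (Fin n)} (hτ : StrictAntiOn τ (middle n))
    (h : pat3412 τ) : pat3142 (τ * o) := by
  obtain ⟨j₁, j₂, j₃, j₄, h12, h23, h34, h12', h41', h34'⟩ := h
  have h₂ := mem_middle_of_lt_of_lt h12 h23
  have h₃ := mem_middle_of_lt_of_lt h23 h34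
  obtain ⟨h₁, h₄⟩ := notMem_of_pat3412_at hτ h12 h34 h₂ h₃ h12' h34'
  refine ⟨j₁, o j₃, o j₂, j₄, lt_of_notMem_middle_of_lt h₁ h12 (ho_maps h₃),
    ho_anti h₂ h₃ h23, lt_of_notMem_middle_of_gt h₄ h34 (ho_maps h₂), ?_, ?_, ?_⟩ <;>
  simpa only [Perm.mul_apply, ho_inv _, ho_fix _ h₁, ho_fix _ h₄]

end Patterns

/-- (a) The permutation `(3,1,4,2) ∈ S₄` contains the pattern `(3,1,4,2)`;
(b) for `σ ∈ Z₁` (i.e. `σ(2) < … < σ(n-1)`) and `o₁` the longest element of `W(L)`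
(fixing `1` and `n`, reversing `2,…,n-1`), `σ·o₁` contains the pattern `(3,4,1,2)`
iff `σ` contains the pattern `(3,1,4,2)`. -/
theorem stmt_11 :
    (∀ σ : Equiv.Perm (Fin 4),
      σ 0 = 2 → σ 1 = 0 → σ 2 = 3 → σ 3 = 1 → pat3142 σ) ∧
    ∀ n : ℕ, 4 ≤ n → ∀ σ : Equiv.Perm (Fin n),
      (∀ i j : Fin n, 1 ≤ (i : ℕ) → i < j → (j : ℕ) < n - 1 → σ i < σ j) →
      ∀ o : Equiv.Perm (Fin n),
        (∀ i : Fin n, ((o i : ℕ) =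
          if (i : ℕ) = 0 ∨ (i : ℕ) = n - 1 then (i : ℕ) else n - 1 - (i : ℕ))) →
        (pat3412 (σ * o) ↔ pat3142 σ) := by
  refine ⟨fun σ h0 h1 h2 h3 => ⟨0, 1, 2, 3, by decide, by decide, by decide, ?_, ?_, ?_⟩, ?_⟩
  · simp only [h0, h2]; decide
  · simp only [h3, h0]; decide
  · simp only [h1, h3]; decide
  intro n _ σ hσ o ho
  have hσ_mono : StrictMonoOn σ (middle n) := fun i hi j hj hij => hσ i j hi.1 hij hj.2
  have ho_fix : ∀ i ∉ middle n, o i = i := fun _ => apply_eq_self_of_notMem_middle ho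
  have ho_maps := mapsTo_middle ho
  have ho_anti := strictAntiOn_middle ho
  have ho_inv := involutive_of_reversal ho
  have ho_sq : o * o = 1 := Perm.ext ho_inv
  have hτ_anti : StrictAntiOn (σ * o : Perm (Fin n)) (middle n) :=
    hσ_mono.comp_strictAntiOn ho_anti ho_maps
  constructor
  · intro h
    simpa only [mul_assoc, ho_sq, mul_one] using
      pat3142_mul_of_pat3412 ho_fix ho_maps ho_anti ho_inv hτ_anti h
  · exact pat3412_mul_of_pat3142 ho_fix ho_maps ho_anti ho_inv hσ_mono
end

section
/- Let u be an n×n matrix with u² = 0 and rk(u) = 2 (in dimension n = 4), so Im(u) = Ker(u) is 2-dimensional. If u(K²) ⊊ K² where K² = span(e₁,e₂), then there exists a complete flag V¹ ⊂ V² ⊂ V³ in K⁴ with V¹ ⊆ K² ⊆ V³ such that Im(u) ⊆ V² ⊆ Ker(u) and u(V³) ⊆ V¹. (Case analysis: if u(K²) = 0 pick v with w = u(v) ≠ 0 and take V¹ = ⟨w⟩, V² = K², V³ = K² ⊕ ⟨v⟩; if dim u(K²) = 1 take V¹ = u(K²), V² = Im(u), V³ = K² ⊕ ⟨v⟩ for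 suitable v.) -/
open Matrix

def K2 (K : Type*) [Field K] : Submodule K (Fin 4 → K) :=
  Submodule.span K {Pi.single (0 : Fin 4) (1 : K), Pi.single (1 : Fin 4) (1 : K)}

/-!
Since `u² = 0` and `rk u = 2`, the plane `N = Im u = Ker u` is forced to be `V²`. The u-invariant
plane `W = K²` meets `N`: otherwise `u(W) ⊆ W ∩ N = 0` puts `W` inside `Ker u = N`. If `W ∩ N` is a
line, the flag `W ∩ N ⊂ N ⊂ W + N` works, because `u` kills `N`, so `u(W + N) = u(W) ⊆ W ∩ N`.
If `W = N`, pick `v ∉ N`; then `⟨u v⟩ ⊂ N ⊂ N + ⟨v⟩` works.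
-/

open Module Submodule

namespace LinearMap

variable {K V : Type*} [Field K] [AddCommGroup V] [Module K V] {f : V →ₗ[K] V}

theorem range_eq_ker_of_comp_self_eq_zero [FiniteDimensional K V] (hf : f ∘ₗ f = 0)
    (hrk : 2 * finrank K (range f) = finrank K V) : range f = ker f :=
  eq_of_le_of_finrank_eq (range_le_ker_iff.mpr hf) (by
    have := finrank_range_add_finrank_ker f
    omega)

theorem map_sup_range_of_range_le_ker (hf : range f ≤ ker f) (W : Submodule K V) :
    map f (W ⊔ range f) = map f W := by
  rw [Submodule.map_sup, le_ker_iff_map.mp hf, sup_bot_eq]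

theorem eq_bot_of_disjoint_range (hf : ker f ≤ range f) {W : Submodule K V}
    (hW : map f W ≤ W) (hdisj : Disjoint W (range f)) : W = ⊥ := by
  have hWker : W ≤ ker f :=
    le_ker_iff_map.mpr (eq_bot_iff.mpr (disjoint_iff.mp hdisj ▸ le_inf hW map_le_range))
  exact hdisj.eq_bot_of_le (hWker.trans hf)

theorem exists_line_le_range_le_of_range_eq_ker [FiniteDimensional K V] [Nontrivial V]
    (hf : range f = ker f) :
    ∃ L H : Submodule K V, finrank K L = 1 ∧ finrank K H = finrank K (range f) + 1 ∧
      L ≤ range f ∧ range f ≤ H ∧ map f H ≤ L := by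
  have hrange_ne_top : range f ≠ ⊤ := by
    intro htop
    have hzero : f = 0 := ker_eq_top.mp (hf ▸ htop)
    rw [hzero, range_zero] at htop
    exact bot_ne_top htop
  obtain ⟨v, hv⟩ : ∃ v, v ∉ range f := by
    by_contra! h
    exact hrange_ne_top (eq_top_iff'.mpr h)
  have hfv : f v ≠ 0 := fun h => hv (hf ▸ h)
  refine ⟨span K {f v}, range f ⊔ span K {v}, finrank_span_singleton hfv,
    finrank_sup_span_singleton hv, span_le.mpr (by simp), le_sup_left, ?_⟩
  rw [sup_comm, map_sup_range_of_range_le_ker hf.le, map_span, Set.image_singleton]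

end LinearMap

open LinearMap

theorem finrank_K2 (K : Type*) [Field K] : finrank K (K2 K) = 2 := by
  have hli : LinearIndependent K ![(Pi.single 0 1 : Fin 4 → K), Pi.single 1 1] := by
    rw [LinearIndependent.pair_iff]
    intro s t h
    simpa using And.intro (congrFun h 0) (congrFun h 1)
  rw [K2, ← Matrix.range_cons_cons_empty, finrank_span_eq_card hli, Fintype.card_fin]

theorem stmt_14_general (K : Type*) [Field K] (u : Matrix (Fin 4) (Fin 4) K)
    (hu : u * u = 0) (hrk : u.rank = 2)
    (hlt : Submodule.map u.mulVecLin (K2 K) < K2 K) :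
    ∃ V1 V2 V3 : Submodule K (Fin 4 → K),
      Module.finrank K V1 = 1 ∧ Module.finrank K V2 = 2 ∧ Module.finrank K V3 = 3 ∧
      V1 ≤ V2 ∧ V2 ≤ V3 ∧ V1 ≤ K2 K ∧ K2 K ≤ V3 ∧
      LinearMap.range u.mulVecLin ≤ V2 ∧ V2 ≤ LinearMap.ker u.mulVecLin ∧
      Submodule.map u.mulVecLin V3 ≤ V1 := by
  set f := u.mulVecLin
  set W := K2 K
  have hN : finrank K (range f) = 2 := hrk
  have hW : finrank K W = 2 := finrank_K2 K
  have hf : range f = ker f := range_eq_ker_of_comp_self_eq_zero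
    (by rw [← mulVecLin_mul, hu, mulVecLin_zero]) (by simp [hN])
  have hWN : finrank K ↥(W ⊓ range f) ≤ 2 := hW ▸ finrank_mono inf_le_left
  interval_cases h : finrank K ↥(W ⊓ range f)
  · have hWbot : W = ⊥ := eq_bot_of_disjoint_range hf.ge hlt.le
      (disjoint_iff.mpr (finrank_eq_zero.mp h))
    rw [hWbot, finrank_bot] at hW
    omega
  · have hsup := finrank_sup_add_finrank_inf_eq W (range f)
    refine ⟨W ⊓ range f, range f, W ⊔ range f, h, hN, by omega, inf_le_right, le_sup_right,
      inf_le_left, le_sup_left, le_rfl, hf.le, ?_⟩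
    rw [map_sup_range_of_range_le_ker hf.le]
    exact le_inf hlt.le map_le_range
  · have hWeq : W = range f := eq_of_le_of_finrank_eq
      (inf_eq_left.mp (eq_of_le_of_finrank_eq inf_le_left (h.trans hW.symm))) (hW.trans hN.symm)
    obtain ⟨L, H, hL, hH, hLN, hNH, hHL⟩ := exists_line_le_range_le_of_range_eq_ker hf
    exact ⟨L, range f, H, hL, hN, by omega, hLN, hNH, hWeq ▸ hLN, hWeq ▸ hNH, le_rfl, hf.le, hHL⟩

/-- If `u² = 0`, `rk u = 2` on `K⁴` and `u(K²) ⊊ K²`, then there is a complete flag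
`V¹ ⊂ V² ⊂ V³` with `V¹ ⊆ K² ⊆ V³`, `Im(u) ⊆ V² ⊆ Ker(u)` and `u(V³) ⊆ V¹`. -/
theorem stmt_14 (K : Type*) [Field K] [IsAlgClosed K] (u : Matrix (Fin 4) (Fin 4) K)
    (hu : u * u = 0) (hrk : u.rank = 2)
    (hlt : Submodule.map u.mulVecLin (K2 K) < K2 K) :
    ∃ V1 V2 V3 : Submodule K (Fin 4 → K),
      Module.finrank K V1 = 1 ∧ Module.finrank K V2 = 2 ∧ Module.finrank K V3 = 3 ∧
      V1 ≤ V2 ∧ V2 ≤ V3 ∧ V1 ≤ K2 K ∧ K2 K ≤ V3 ∧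
      LinearMap.range u.mulVecLin ≤ V2 ∧ V2 ≤ LinearMap.ker u.mulVecLin ∧
      Submodule.map u.mulVecLin V3 ≤ V1 :=
  stmt_14_general K u hu hrk hlt
end

section
/- For 1 ≤ i < j ≤ n and t ∈ K with t ≠ 0, the lower-triangular unipotent matrix u_{-ε}(t) = id + t·E_{j,i} factors as (r̊_ε + t·E_{j,j} − t⁻¹·E_{i,i} − E_{j,i}) · r̊_ε · (id + t⁻¹·E_{i,j}), where r̊_ε is the permutation matrix of the transposition (i j); in particular id + t·E_{j,i} ∈ B·r̊_ε·B, where B is the group of invertible upper-triangular matrices. -/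
open Matrix

def permMat (K : Type*) [Field K] (n : ℕ) (τ : Equiv.Perm (Fin n)) :
    Matrix (Fin n) (Fin n) K :=
  fun r c => if τ c = r then 1 else 0

/-!
Write `P` for the permutation matrix of `(i j)` and `A` for the left factor. Right
multiplication by `P` swaps columns `i` and `j` and `P² = 1`, so
`A P = 1 + t E_{j,i} - t⁻¹ E_{i,j} - E_{j,j}`. Multiplying by `1 + t⁻¹ E_{i,j}` adds
`t⁻¹ E_{i,j} + E_{j,j}` (the other products vanish as `i ≠ j`), leaving `1 + t E_{j,i}`.
The only subdiagonal entry of `P` is the `1` at `(j, i)`, which `- E_{j,i}` removes, so `A` is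
upper triangular; and `A` is invertible because `A P (1 + t⁻¹ E_{i,j})` is a transvection.
-/

section

variable {K : Type*} [Field K] {n : ℕ}

theorem permMat_one : permMat K n 1 = 1 := by
  ext r c
  simp [permMat, one_apply, eq_comm]

theorem permMat_mul (σ τ : Equiv.Perm (Fin n)) :
    permMat K n σ * permMat K n τ = permMat K n (σ * τ) := by
  ext r c
  simp only [mul_apply, permMat, mul_ite, mul_one, mul_zero, Finset.sum_ite_eq,
    Finset.mem_univ, if_true, Equiv.Perm.coe_mul, Function.comp_apply]
  rfl

theorem permMat_swap_mul_self (i j : Fin n) :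
    permMat K n (Equiv.swap i j) * permMat K n (Equiv.swap i j) = 1 := by
  rw [permMat_mul, Equiv.swap_mul_self, permMat_one]

theorem single_mul_permMat (a b : Fin n) (c : K) (τ : Equiv.Perm (Fin n)) :
    single a b c * permMat K n τ = single a (τ.symm b) c := by
  ext r s
  simp [permMat, mul_apply, single_apply, Equiv.eq_symm_apply, eq_comm]

theorem permMat_swap_sub_single_isUpperTriangular {i j : Fin n} (hij : i < j) :
    (permMat K n (Equiv.swap i j) - single j i 1).IsUpperTriangular := by
  intro r c hcr
  simp only [Matrix.sub_apply, permMat, single_apply, Equiv.swap_apply_def]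
  split_ifs <;> grind

theorem one_add_smul_single_eq_transvection (i j : Fin n) (c : K) :
    (1 : Matrix (Fin n) (Fin n) K) + c • single i j 1 = transvection i j c := by
  rw [smul_single, smul_eq_mul, mul_one, transvection]

theorem isUnit_transvection {i j : Fin n} (hij : i ≠ j) (c : K) :
    IsUnit (transvection i j c) := by
  rw [isUnit_iff_isUnit_det, det_transvection_of_ne _ _ hij]
  exact isUnit_one

variable {i j : Fin n}

theorem one_add_smul_single_eq_mul_permMat_swap_mul (hij : i ≠ j) {t : K} (ht : t ≠ 0) :
    (1 : Matrix (Fin n) (Fin n) K) + t • single j i 1 =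
      (permMat K n (Equiv.swap i j) + t • single j j 1 - t⁻¹ • single i i 1 - single j i 1)
        * permMat K n (Equiv.swap i j) * (1 + t⁻¹ • single i j 1) := by
  have hAP : (permMat K n (Equiv.swap i j) + t • single j j 1 - t⁻¹ • single i i 1
      - single j i 1) * permMat K n (Equiv.swap i j) =
        1 + t • single j i 1 - t⁻¹ • single i j 1 - single j j 1 := by
    simp only [sub_mul, add_mul, permMat_swap_mul_self, Matrix.smul_mul, single_mul_permMat,
      Equiv.symm_swap, Equiv.swap_apply_left, Equiv.swap_apply_right]
  rw [hAP]
  simp only [smul_single, smul_eq_mul, mul_one, sub_mul, add_mul, mul_add, one_mul,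
    single_mul_single_same, single_mul_single_of_ne, ne_eq, hij.symm, not_false_eq_true,
    mul_inv_cancel₀ ht]
  abel

theorem permMat_swap_add_single_sub_single_sub_single_isUpperTriangular (hij : i < j) (t : K) :
    (permMat K n (Equiv.swap i j) + t • single j j 1 - t⁻¹ • single i i 1
      - single j i 1).IsUpperTriangular := by
  have hA : permMat K n (Equiv.swap i j) + t • single j j 1 - t⁻¹ • single i i 1 - single j i 1
      = permMat K n (Equiv.swap i j) - single j i 1 + single j j t - single i i t⁻¹ := by
    simp only [smul_single, smul_eq_mul, mul_one]
    abel
  rw [hA]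
  exact ((permMat_swap_sub_single_isUpperTriangular hij).add
    (blockTriangular_single le_rfl _)).sub (blockTriangular_single le_rfl _)

end

/-- For `i < j` and `t ≠ 0`, `id + t·E_{j,i}` factors as
`(r̊ + t·E_{j,j} − t⁻¹·E_{i,i} − E_{j,i}) · r̊ · (id + t⁻¹·E_{i,j})`, where `r̊` is the
permutation matrix of the transposition `(i j)`; in particular `id + t·E_{j,i} ∈ B·r̊·B`. -/
theorem stmt_15 (K : Type*) [Field K] (n : ℕ) (i j : Fin n) (hij : i < j)
    (t : K) (ht : t ≠ 0) :
    ((1 : Matrix (Fin n) (Fin n) K) + t • single j i (1 : K) =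
      (permMat K n (Equiv.swap i j) + t • single j j (1 : K)
          - t⁻¹ • single i i (1 : K) - single j i (1 : K))
        * permMat K n (Equiv.swap i j)
        * ((1 : Matrix (Fin n) (Fin n) K) + t⁻¹ • single i j (1 : K))) ∧
    ∃ b₁ b₂ : GL (Fin n) K,
      (∀ r c : Fin n, c < r → (b₁ : Matrix (Fin n) (Fin n) K) r c = 0) ∧
      (∀ r c : Fin n, c < r → (b₂ : Matrix (Fin n) (Fin n) K) r c = 0) ∧
      (1 : Matrix (Fin n) (Fin n) K) + t • single j i (1 : K) =
        (b₁ : Matrix (Fin n) (Fin n) K) * permMat K n (Equiv.swap i j)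
          * (b₂ : Matrix (Fin n) (Fin n) K) := by
  have hfac := one_add_smul_single_eq_mul_permMat_swap_mul hij.ne ht
  refine ⟨hfac, ?_⟩
  simp only [one_add_smul_single_eq_transvection] at hfac ⊢
  -- square matrices over a field are Dedekind-finite, so a left factor of a unit is a unit
  have hA := isUnit_of_mul_isUnit_left <| isUnit_of_mul_isUnit_left <|
    hfac ▸ isUnit_transvection hij.ne.symm t
  refine ⟨hA.unit, (isUnit_transvection hij.ne t⁻¹).unit, fun r c hcr => ?_,
    fun r c hcr => ?_, hfac⟩
  · exact permMat_swap_add_single_sub_single_sub_single_isUpperTriangular hij t hcr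
  · exact blockTriangular_transvection (b := id) hij.le t⁻¹ hcr
end
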